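/- arXiv:2210.04657 — 4 statements merged into one kernel-verified Lean document; each statement's English description precedes it below -/
import Mathlib

section
/- Let ι ∈ (0,1] satisfy ι³ + 9K(6π)^{-1/3} ι = 1 for some K ≥ 0, and set ρ(t) = ι³/(6π t²), v^i(t,x) = (2/(3t)) x^i, φ(t,x) = (ι³/(9t²))|x|², p(t,x) = K ι⁴ (6π)^{-4/3} t^{-4} |x|² + 𝔭 (𝔭 constant). Then the momentum equation ∂_t v^i + v^j ∂_j v^i + (∂^i p)/ρ + ∂^i φ = 0 holds on (0,∞) × ℝ³. -/
open Real Finset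

lemma sum_update_sq (x : Fin 3 → ℝ) (i : Fin 3) (s : ℝ) :
    ∑ k : Fin 3, Function.update x i s k ^ 2
      = s ^ 2 + ∑ k ∈ Finset.univ.erase i, x k ^ 2 := by
  have : (fun k => Function.update x i s k ^ 2)
      = Function.update (fun k => x k ^ 2) i (s ^ 2) := by
    funext k
    exact Function.apply_update (fun _ y => y ^ 2) x i s k
  rw [this, Finset.sum_update_of_mem (Finset.mem_univ i)]
  congr 1
  rw [Finset.sdiff_singleton_eq_erase]

lemma deriv_sq_affine (C B D a : ℝ) :
    deriv (fun s : ℝ => C * (s ^ 2 + B) + D) a = C * (2 * a) := by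
  have h : HasDerivAt (fun s : ℝ => C * (s ^ 2 + B) + D) (C * (2 * a)) a := by
    have := ((hasDerivAt_pow 2 a).add_const B).const_mul C |>.add_const D
    simpa using this
  exact h.deriv

theorem momentum_equation_background (ι K 𝔭 : ℝ) (hι : ι ∈ Set.Ioc (0 : ℝ) 1)
    (hK : 0 ≤ K)
    (hid : ι ^ 3 + 9 * K * (6 * Real.pi) ^ (-(1 : ℝ) / 3) * ι = 1)
    (ρ : ℝ → ℝ) (v : ℝ → (Fin 3 → ℝ) → Fin 3 → ℝ)
    (φ p : ℝ → (Fin 3 → ℝ) → ℝ)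
    (hρ : ∀ t, ρ t = ι ^ 3 / (6 * Real.pi * t ^ 2))
    (hv : ∀ t x i, v t x i = (2 / (3 * t)) * x i)
    (hφ : ∀ t x, φ t x = (ι ^ 3 / (9 * t ^ 2)) * ∑ i : Fin 3, x i ^ 2)
    (hp : ∀ t x, p t x =
      K * ι ^ 4 * (6 * Real.pi) ^ (-(4 : ℝ) / 3) * t ^ (-(4 : ℝ)) *
        (∑ i : Fin 3, x i ^ 2) + 𝔭) :
    ∀ t : ℝ, 0 < t → ∀ x : Fin 3 → ℝ, ∀ i : Fin 3,
      deriv (fun τ : ℝ => v τ x i) t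
        + (∑ j : Fin 3, v t x j * deriv (fun s : ℝ => v t (Function.update x j s) i) (x j))
        + deriv (fun s : ℝ => p t (Function.update x i s)) (x i) / ρ t
        + deriv (fun s : ℝ => φ t (Function.update x i s)) (x i) = 0 := by
  intro t ht x i
  obtain ⟨hι0, hι1⟩ := hι
  have hπ : (0:ℝ) < 6 * Real.pi := by positivity
  -- time derivative
  have h1 : deriv (fun τ : ℝ => v τ x i) t = -(2 * x i / 3) * (t ^ 2)⁻¹ := by
    have heq : (fun τ : ℝ => v τ x i) = fun τ : ℝ => (2 * x i / 3) * τ⁻¹ := by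
      funext τ; rw [hv]; ring
    rw [heq]
    have h : HasDerivAt (fun τ : ℝ => (2 * x i / 3) * τ⁻¹)
        ((2 * x i / 3) * (-(t ^ 2)⁻¹)) t := (hasDerivAt_inv ht.ne').const_mul _
    rw [h.deriv]; ring
  -- convective term
  have h2 : ∀ j : Fin 3,
      deriv (fun s : ℝ => v t (Function.update x j s) i) (x j)
        = if j = i then 2 / (3 * t) else 0 := by
    intro j
    by_cases hj : j = i
    · have heq : (fun s : ℝ => v t (Function.update x j s) i)
          = fun s : ℝ => (2 / (3 * t)) * s := by
        funext s; rw [hv, hj, Function.update_self]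
      rw [heq, if_pos hj]
      have h : HasDerivAt (fun s : ℝ => (2 / (3 * t)) * s) (2 / (3 * t)) (x j) := by
        simpa using (hasDerivAt_id (x j)).const_mul (2 / (3 * t))
      exact h.deriv
    · have heq : (fun s : ℝ => v t (Function.update x j s) i)
          = fun _ : ℝ => (2 / (3 * t)) * x i := by
        funext s; rw [hv, Function.update_of_ne (Ne.symm hj)]
      rw [heq, if_neg hj, deriv_const]
  -- pressure derivative
  have h3 : deriv (fun s : ℝ => p t (Function.update x i s)) (x i)
      = K * ι ^ 4 * (6 * Real.pi) ^ (-(4 : ℝ) / 3) * t ^ (-(4 : ℝ)) * (2 * x i) := by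
    have heq : (fun s : ℝ => p t (Function.update x i s))
        = fun s : ℝ => (K * ι ^ 4 * (6 * Real.pi) ^ (-(4 : ℝ) / 3) * t ^ (-(4 : ℝ)))
            * (s ^ 2 + ∑ k ∈ Finset.univ.erase i, x k ^ 2) + 𝔭 := by
      funext s; rw [hp, sum_update_sq]
    rw [heq, deriv_sq_affine]
  -- potential derivative
  have h4 : deriv (fun s : ℝ => φ t (Function.update x i s)) (x i)
      = (ι ^ 3 / (9 * t ^ 2)) * (2 * x i) := by
    have heq : (fun s : ℝ => φ t (Function.update x i s))
        = fun s : ℝ => (ι ^ 3 / (9 * t ^ 2))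
            * (s ^ 2 + ∑ k ∈ Finset.univ.erase i, x k ^ 2) + 0 := by
      funext s; rw [hφ, sum_update_sq]; ring
    rw [heq, deriv_sq_affine]
  rw [h1, h3, h4, hρ]
  have hsum : (∑ j : Fin 3, v t x j *
      deriv (fun s : ℝ => v t (Function.update x j s) i) (x j))
      = (2 / (3 * t)) * x i * (2 / (3 * t)) := by
    rw [Finset.sum_eq_single i]
    · rw [h2, if_pos rfl, hv]
    · intro j _ hj; rw [h2, if_neg hj, mul_zero]
    · intro h; exact absurd (Finset.mem_univ i) h
  rw [hsum]
  -- rpow simplifications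
  have ht4 : t ^ (-(4:ℝ)) = (t ^ 4)⁻¹ := by
    rw [Real.rpow_neg ht.le, ← Real.rpow_natCast t 4]; norm_num
  have hA : (6 * Real.pi) ^ (-(4:ℝ)/3)
      = (6 * Real.pi) ^ (-(1:ℝ)/3) * (6 * Real.pi)⁻¹ := by
    rw [← Real.rpow_neg_one (6 * Real.pi), ← Real.rpow_add hπ]
    norm_num
  rw [ht4, hA]
  set A := (6 * Real.pi) ^ (-(1:ℝ)/3) with hAdef
  have hπ' : (6 * Real.pi) ≠ 0 := hπ.ne'
  have ht' : t ≠ 0 := ht.ne'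
  have hι' : ι ≠ 0 := hι0.ne'
  field_simp
  linear_combination (18 * x i) * hid
end

section
/- Under the hypotheses 𝔞 > 1, 𝔟 > 0, 1 < 𝔠 < 3/2, β, β₀ > 0 with β₀ > ā(1+β)/(c̄ t₀) (ā = 1−𝔞, c̄ = 1−𝔠), the solution satisfies the improved lower bound (1+β)(1 − 𝙴 t₀^{ā} + 𝙴 t^{ā})^{1/c̄} < 1 + f(t) for t ∈ (t₀, t_m), where 𝙴 = c̄ β₀ t₀^{1−ā}/(ā(1+β)) > 0. -/
open Set Real Filter Topology

set_option maxHeartbeats 1000000 in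
theorem ode_improved_lower_bound (𝔞 𝔟 𝔠 β β₀ t₀ t_m : ℝ)
    (ha : 1 < 𝔞) (hb : 0 < 𝔟) (hc1 : 1 < 𝔠) (hc2 : 𝔠 < 3 / 2)
    (hβ : 0 < β) (hβ₀ : 0 < β₀) (ht₀ : 0 < t₀) (htm : t₀ < t_m)
    (hbig : β₀ > (1 - 𝔞) * (1 + β) / ((1 - 𝔠) * t₀))
    (f : ℝ → ℝ) (hf : ContDiffOn ℝ 2 f (Set.Ico t₀ t_m))
    (hode : ∀ t ∈ Set.Ico t₀ t_m,
      deriv (deriv f) t + (𝔞 / t) * deriv f t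
        - (𝔟 / t ^ 2) * f t * (1 + f t)
        - 𝔠 * (deriv f t) ^ 2 / (1 + f t) = 0)
    (hd1 : f t₀ = β) (hd2 : deriv f t₀ = β₀) :
    ∀ t ∈ Set.Ioo t₀ t_m,
      (1 + β) *
        (1 - ((1 - 𝔠) * β₀ * t₀ ^ (1 - (1 - 𝔞)) / ((1 - 𝔞) * (1 + β))) * t₀ ^ (1 - 𝔞)
           + ((1 - 𝔠) * β₀ * t₀ ^ (1 - (1 - 𝔞)) / ((1 - 𝔞) * (1 + β))) * t ^ (1 - 𝔞))
          ^ (1 / (1 - 𝔠)) < 1 + f t := by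
  have hUD : UniqueDiffOn ℝ (Set.Ico t₀ t_m) := uniqueDiffOn_Ico t₀ t_m
  set I : Set ℝ := Set.Ico t₀ t_m with hIdef
  set f' : ℝ → ℝ := derivWithin f I with hf'def
  set f'' : ℝ → ℝ := derivWithin f' I with hf''def
  have hfc1 : ContDiffOn ℝ 1 f' I := hf.derivWithin hUD (by norm_num)
  have hf'cont : ContinuousOn f' I := hfc1.continuousOn
  have hfcont : ContinuousOn f I := hf.continuousOn
  have hfd : ∀ s ∈ I, HasDerivWithinAt f (f' s) I s := fun s hs =>
    ((hf.differentiableOn (by norm_num)) s hs).hasDerivWithinAt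
  have hf'd : ∀ s ∈ I, HasDerivWithinAt f' (f'' s) I s := fun s hs =>
    ((hfc1.differentiableOn (by norm_num)) s hs).hasDerivWithinAt
  have hIoo : Set.Ioo t₀ t_m ⊆ I := Set.Ioo_subset_Ico_self
  have hmemnhds : ∀ s ∈ Set.Ioo t₀ t_m, I ∈ 𝓝 s := fun s hs =>
    mem_nhds_iff.2 ⟨Set.Ioo t₀ t_m, hIoo, isOpen_Ioo, hs⟩
  have hfdi : ∀ s ∈ Set.Ioo t₀ t_m, HasDerivAt f (f' s) s := fun s hs =>
    (hfd s (hIoo hs)).hasDerivAt (hmemnhds s hs)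
  have hf'di : ∀ s ∈ Set.Ioo t₀ t_m, HasDerivAt f' (f'' s) s := fun s hs =>
    (hf'd s (hIoo hs)).hasDerivAt (hmemnhds s hs)
  have hderiv_eq : ∀ s ∈ Set.Ioo t₀ t_m, deriv f s = f' s := fun s hs => (hfdi s hs).deriv
  have hderiv2_eq : ∀ s ∈ Set.Ioo t₀ t_m, deriv (deriv f) s = f'' s := by
    intro s hs
    have h1 : deriv f =ᶠ[𝓝 s] f' := by
      filter_upwards [mem_nhds_iff.2 ⟨Set.Ioo t₀ t_m, subset_rfl, isOpen_Ioo, hs⟩] with z hz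
      exact hderiv_eq z hz
    rw [h1.deriv_eq]
    exact (hf'di s hs).deriv
  have hf't₀ : f' t₀ = β₀ := by
    have hdiff : DifferentiableAt ℝ f t₀ := by
      by_contra hnd
      rw [deriv_zero_of_not_differentiableAt hnd] at hd2
      exact absurd hd2.symm (ne_of_gt hβ₀)
    have hh : HasDerivAt f β₀ t₀ := hd2 ▸ hdiff.hasDerivAt
    exact hh.hasDerivWithinAt.derivWithin (hUD t₀ ⟨le_refl _, htm⟩)
  have hode' : ∀ s ∈ Set.Ioo t₀ t_m,
      f'' s = -(𝔞 / s) * f' s + (𝔟 / s ^ 2) * f s * (1 + f s) + 𝔠 * (f' s) ^ 2 / (1 + f s) := by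
    intro s hs
    have h0 := hode s (hIoo hs)
    rw [hderiv_eq s hs, hderiv2_eq s hs] at h0
    linarith
  set h : ℝ → ℝ := fun s => s ^ 𝔞 * (1 + f s) ^ (-𝔠) * f' s with hhdef
  have hrpow2 : ∀ x : ℝ, 0 < x → x ^ (𝔞 - 2) = x ^ 𝔞 / x ^ (2:ℕ) := by
    intro x hx
    rw [show (𝔞 - 2 : ℝ) = 𝔞 - ((2:ℕ):ℝ) by norm_num, Real.rpow_sub hx, Real.rpow_natCast]
  have hhd : ∀ s ∈ Set.Ioo t₀ t_m, 0 < 1 + f s →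
      HasDerivAt h (𝔟 * s ^ (𝔞 - 2) * f s * (1 + f s) * (1 + f s) ^ (-𝔠)) s := by
    intro s hs hu
    have hspos : 0 < s := lt_trans ht₀ hs.1
    have hp : HasDerivAt (fun x : ℝ => x ^ 𝔞) (𝔞 * s ^ (𝔞 - 1)) s :=
      Real.hasDerivAt_rpow_const (Or.inl (ne_of_gt hspos))
    have hq0 : HasDerivAt (fun x => 1 + f x) (f' s) s := (hfdi s hs).const_add 1
    have hq : HasDerivAt (fun x => (1 + f x) ^ (-𝔠))
        (f' s * (-𝔠) * (1 + f s) ^ (-𝔠 - 1)) s := hq0.rpow_const (Or.inl (ne_of_gt hu))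
    have hprod := (hp.mul hq).mul (hf'di s hs)
    refine hprod.congr_deriv ?_
    simp only [Pi.mul_apply]
    have e1 : s ^ (𝔞 - 1) = s ^ 𝔞 / s := by rw [Real.rpow_sub hspos, Real.rpow_one]
    have e2 : s ^ (𝔞 - 2) = s ^ 𝔞 / s ^ (2:ℕ) := hrpow2 s hspos
    have e3 : (1 + f s) ^ (-𝔠 - 1) = (1 + f s) ^ (-𝔠) / (1 + f s) := by
      rw [Real.rpow_sub hu, Real.rpow_one]
    rw [hode' s hs, e1, e2, e3]
    field_simp
    ring
  have hβ1 : (0:ℝ) < 1 + β := by linarith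
  have hht₀ : h t₀ = t₀ ^ 𝔞 * (1 + β) ^ (-𝔠) * β₀ := by
    show t₀ ^ 𝔞 * (1 + f t₀) ^ (-𝔠) * f' t₀ = _
    rw [hd1, hf't₀]
  have hht₀pos : 0 < h t₀ := by
    rw [hht₀]
    have p1 : (0:ℝ) < t₀ ^ 𝔞 := Real.rpow_pos_of_pos ht₀ _
    have p2 : (0:ℝ) < (1 + β) ^ (-𝔠) := Real.rpow_pos_of_pos hβ1 _
    positivity
  have hhcont : ∀ J : Set ℝ, J ⊆ I → (∀ s ∈ J, 0 < 1 + f s) → ContinuousOn h J := by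
    intro J hJI hJu
    have c1 : ContinuousOn (fun s : ℝ => s ^ 𝔞) J := fun s hs =>
      (Real.continuousAt_rpow_const s 𝔞
        (Or.inl (ne_of_gt (lt_of_lt_of_le ht₀ (hJI hs).1)))).continuousWithinAt
    have c2 : ContinuousOn (fun s => (1 + f s) ^ (-𝔠)) J :=
      ContinuousOn.rpow_const (continuousOn_const.add (hfcont.mono hJI))
        (fun s hs => Or.inl (ne_of_gt (hJu s hs)))
    exact (c1.mul c2).mul (hf'cont.mono hJI)
  have hsmono : ∀ D : Set ℝ, Convex ℝ D → D ⊆ I → (∀ s ∈ D, β ≤ f s) → StrictMonoOn h D := by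
    intro D hDc hDI hDβ
    have hDu : ∀ s ∈ D, 0 < 1 + f s := fun s hs => by linarith [hDβ s hs]
    refine strictMonoOn_of_deriv_pos hDc (hhcont D hDI hDu) ?_
    intro x hx
    have hxI : x ∈ Set.Ioo t₀ t_m := by
      have h1 : interior D ⊆ interior I := interior_mono hDI
      have h2 : interior I = Set.Ioo t₀ t_m := by rw [hIdef, interior_Ico]
      exact h2 ▸ h1 hx
    have hxD : x ∈ D := interior_subset hx
    have hu := hDu x hxD
    rw [(hhd x hxI hu).deriv]
    have p1 : 0 < x ^ (𝔞 - 2) := Real.rpow_pos_of_pos (lt_trans ht₀ hxI.1) _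
    have p2 : 0 < (1 + f x) ^ (-𝔠) := Real.rpow_pos_of_pos hu _
    have p3 : 0 < f x := lt_of_lt_of_le hβ (hDβ x hxD)
    positivity
  have hf'pos_of : ∀ s ∈ I, 0 < 1 + f s → h t₀ ≤ h s → 0 < f' s := by
    intro s hsI hu hh
    have p1 : 0 < s ^ 𝔞 := Real.rpow_pos_of_pos (lt_of_lt_of_le ht₀ hsI.1) _
    have p2 : 0 < (1 + f s) ^ (-𝔠) := Real.rpow_pos_of_pos hu _
    have hh' : h s = s ^ 𝔞 * (1 + f s) ^ (-𝔠) * f' s := rfl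
    rw [hh'] at hh
    by_contra hle
    push_neg at hle
    nlinarith [mul_pos p1 p2]
  have hslope : ∀ τ ∈ I, 0 < f' τ → ∀ᶠ z in 𝓝[>] τ, f τ < f z := by
    intro τ hτ hpos
    have hd := hfd τ hτ
    rw [hasDerivWithinAt_iff_tendsto_slope] at hd
    have hle : 𝓝[>] τ ≤ 𝓝[I \ {τ}] τ := by
      rw [nhdsWithin_le_iff]
      have h1 : Set.Ioo τ t_m ∈ 𝓝[>] τ := Ioo_mem_nhdsGT_of_mem ⟨le_refl _, hτ.2⟩
      exact Filter.mem_of_superset h1 (fun z hz => ⟨⟨le_trans hτ.1 (le_of_lt hz.1), hz.2⟩,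
        ne_of_gt hz.1⟩)
    have h2 : ∀ᶠ z in 𝓝[>] τ, 0 < slope f τ z :=
      (hd.mono_left hle).eventually_mem (Ioi_mem_nhds hpos)
    filter_upwards [h2, self_mem_nhdsWithin] with z hz hz'
    have hz'' : (0:ℝ) < z - τ := sub_pos.2 hz'
    rw [slope_def_field] at hz
    have : 0 < f z - f τ := by
      rcases (div_pos_iff.mp hz) with ⟨h3, _⟩ | ⟨_, h4⟩
      · exact h3
      · linarith
    linarith
  have stepA : ∀ s ∈ I, β ≤ f s := by
    have main : ∀ t1 ∈ I, ∀ s ∈ Set.Icc t₀ t1, β ≤ f s := by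
      intro t1 ht1
      rcases eq_or_lt_of_le ht1.1 with heq | ht1gt
      · intro s hs
        have : s = t₀ := le_antisymm (heq ▸ hs.2) hs.1
        rw [this, hd1]
      set A : Set ℝ := {r | r ∈ Set.Icc t₀ t1 ∧ ∀ s ∈ Set.Icc t₀ r, β ≤ f s} with hA
      have hAne : t₀ ∈ A := ⟨⟨le_refl _, le_of_lt ht1gt⟩, by
        intro s hs
        have : s = t₀ := le_antisymm hs.2 hs.1
        rw [this, hd1]⟩
      have hAbdd : BddAbove A := ⟨t1, fun r hr => hr.1.2⟩
      set τ := sSup A with hτdef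
      have hτmem : τ ∈ Set.Icc t₀ t1 :=
        ⟨le_csSup hAbdd hAne, csSup_le ⟨t₀, hAne⟩ fun r hr => hr.1.2⟩
      have hτm : τ < t_m := lt_of_le_of_lt hτmem.2 ht1.2
      have hτI : τ ∈ I := ⟨hτmem.1, hτm⟩
      have hτA : τ ∈ A := by
        refine ⟨hτmem, ?_⟩
        intro s hs
        rcases lt_or_eq_of_le hs.2 with hlt | heq
        · obtain ⟨r, hrA, hsr⟩ := exists_lt_of_lt_csSup ⟨t₀, hAne⟩ hlt
          exact hrA.2 s ⟨hs.1, le_of_lt hsr⟩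
        · subst heq
          have hC : IsClosed (Set.Icc t₀ t1 ∩ f ⁻¹' Set.Ici β) := by
            refine ContinuousOn.preimage_isClosed_of_isClosed
              (hfcont.mono ?_) isClosed_Icc isClosed_Ici
            intro z hz
            exact ⟨hz.1, lt_of_le_of_lt hz.2 ht1.2⟩
          have hsub : A ⊆ Set.Icc t₀ t1 ∩ f ⁻¹' Set.Ici β :=
            fun r hr => ⟨hr.1, hr.2 r ⟨hr.1.1, le_refl r⟩⟩
          have hcl := csSup_mem_closure ⟨t₀, hAne⟩ hAbdd
          have := hC.closure_subset ((closure_mono hsub) hcl)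
          exact this.2
      rcases eq_or_lt_of_le hτmem.2 with heq | hlt
      · exact heq ▸ hτA.2
      · exfalso
        have hsubI : Set.Icc t₀ τ ⊆ I := fun s hs => ⟨hs.1, lt_of_le_of_lt hs.2 hτm⟩
        have hmono := hsmono (Set.Icc t₀ τ) (convex_Icc _ _) hsubI hτA.2
        have hge : ∀ s ∈ Set.Icc t₀ τ, h t₀ ≤ h s := by
          intro s hs
          rcases eq_or_lt_of_le hs.1 with heq2 | hlt2
          · rw [← heq2]
          · exact le_of_lt (hmono ⟨le_refl _, hτmem.1⟩ hs hlt2)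
        have hf'τ : 0 < f' τ := by
          refine hf'pos_of τ hτI ?_ (hge τ ⟨hτmem.1, le_refl _⟩)
          have := hτA.2 τ ⟨hτmem.1, le_refl _⟩
          linarith
        obtain ⟨ε, hε, hIoc⟩ := mem_nhdsGT_iff_exists_Ioc_subset.mp
          (hslope τ hτI hf'τ)
        set t2 := min ε t1 with ht2def
        have ht2 : τ < t2 := lt_min hε hlt
        have hfτ : β ≤ f τ := hτA.2 τ ⟨hτmem.1, le_refl _⟩
        have ht2A : t2 ∈ A := by
          refine ⟨⟨le_trans hτmem.1 (le_of_lt ht2), min_le_right _ _⟩, ?_⟩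
          intro s hs
          rcases le_or_gt s τ with hsτ | hsτ
          · exact hτA.2 s ⟨hs.1, hsτ⟩
          · have : s ∈ Set.Ioc τ ε := ⟨hsτ, le_trans hs.2 (min_le_left _ _)⟩
            have := hIoc this
            exact le_trans hfτ (le_of_lt this)
        exact absurd (le_csSup hAbdd ht2A) (not_le.mpr ht2)
    intro s hs
    exact main s hs s ⟨hs.1, le_refl s⟩
  have hupos : ∀ s ∈ I, 0 < 1 + f s := fun s hs => by linarith [stepA s hs]
  have hhI : StrictMonoOn h I := hsmono I (convex_Ico _ _) subset_rfl stepA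
  have ht₀I : t₀ ∈ I := ⟨le_refl _, htm⟩
  have hca : (1 - 𝔠 : ℝ) < 0 := by linarith
  have hca_ne : (1 - 𝔠 : ℝ) ≠ 0 := ne_of_lt hca
  have haa_ne : (1 - 𝔞 : ℝ) ≠ 0 := by intro hh; linarith [hh]
  intro t ht
  set E : ℝ := (1 - 𝔠) * β₀ * t₀ ^ (1 - (1 - 𝔞)) / ((1 - 𝔞) * (1 + β)) with hEdef
  set K : ℝ := (1 + β) ^ (1 - 𝔠) * E with hKdef
  have ht₀pow : t₀ ^ ((1:ℝ) - (1 - 𝔞)) = t₀ ^ 𝔞 := by norm_num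
  have hsplit : (1 + β) ^ ((1:ℝ) - 𝔠) = (1 + β) ^ (-𝔠) * (1 + β) := by
    rw [show (1:ℝ) - 𝔠 = -𝔠 + 1 by ring, Real.rpow_add hβ1, Real.rpow_one]
  have hK : K * (1 - 𝔞) = (1 - 𝔠) * h t₀ := by
    rw [hKdef, hEdef, hht₀, ht₀pow, hsplit]
    field_simp
  set ψ : ℝ → ℝ := fun s => (1 + f s) ^ (1 - 𝔠) - K * s ^ (1 - 𝔞) with hψdef
  have hanti : StrictAntiOn ψ I := by
    have hcont : ContinuousOn ψ I := by
      have c1 : ContinuousOn (fun s => (1 + f s) ^ (1 - 𝔠)) I :=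
        ContinuousOn.rpow_const (continuousOn_const.add hfcont)
          (fun s hs => Or.inl (ne_of_gt (hupos s hs)))
      have c2 : ContinuousOn (fun s : ℝ => K * s ^ (1 - 𝔞)) I := by
        refine continuousOn_const.mul (fun s hs => ?_)
        exact (Real.continuousAt_rpow_const s (1 - 𝔞)
          (Or.inl (ne_of_gt (lt_of_lt_of_le ht₀ hs.1)))).continuousWithinAt
      exact c1.sub c2
    refine strictAntiOn_of_deriv_neg (convex_Ico _ _) hcont ?_
    intro x hx
    rw [interior_Ico] at hx
    have hxpos : 0 < x := lt_trans ht₀ hx.1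
    have hu : 0 < 1 + f x := hupos x (hIoo hx)
    have hdψ : HasDerivAt ψ
        (f' x * (1 - 𝔠) * (1 + f x) ^ ((1 - 𝔠) - 1)
          - K * ((1 - 𝔞) * x ^ ((1 - 𝔞) - 1))) x := by
      have d1 : HasDerivAt (fun s => (1 + f s) ^ (1 - 𝔠))
          (f' x * (1 - 𝔠) * (1 + f x) ^ ((1 - 𝔠) - 1)) x :=
        (((hfdi x hx).const_add 1)).rpow_const (Or.inl (ne_of_gt hu))
      have d2 : HasDerivAt (fun s : ℝ => K * s ^ (1 - 𝔞))
          (K * ((1 - 𝔞) * x ^ ((1 - 𝔞) - 1))) x :=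
        (Real.hasDerivAt_rpow_const (Or.inl (ne_of_gt hxpos))).const_mul K
      exact d1.sub d2
    rw [hdψ.deriv]
    have hhx : h x = x ^ 𝔞 * (1 + f x) ^ (-𝔠) * f' x := rfl
    have hSpos : 0 < x ^ 𝔞 := Real.rpow_pos_of_pos hxpos _
    have hltx : h t₀ < h x := hhI ht₀I (hIoo hx) hx.1
    rw [show ((1 - 𝔠) - 1 : ℝ) = -𝔠 by ring, show ((1 - 𝔞) - 1 : ℝ) = -𝔞 by ring,
      Real.rpow_neg (le_of_lt hxpos)]
    have key : f' x * (1 - 𝔠) * (1 + f x) ^ (-𝔠) = ((1 - 𝔠) * h x) * (x ^ 𝔞)⁻¹ := by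
      rw [hhx]
      field_simp
    have h2 : K * ((1 - 𝔞) * (x ^ 𝔞)⁻¹) = ((1 - 𝔠) * h t₀) * (x ^ 𝔞)⁻¹ := by
      rw [← hK]; ring
    rw [key, h2]
    have h3 : (1 - 𝔠) * h x < (1 - 𝔠) * h t₀ := by nlinarith
    have hinv : 0 < (x ^ 𝔞)⁻¹ := inv_pos.2 hSpos
    nlinarith
  have hψt : ψ t < ψ t₀ := hanti ht₀I (hIoo ht) ht.1
  have hψt₀ : ψ t₀ = (1 + β) ^ (1 - 𝔠) - K * t₀ ^ (1 - 𝔞) := by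
    show (1 + f t₀) ^ (1 - 𝔠) - K * t₀ ^ (1 - 𝔞) = _
    rw [hd1]
  set B : ℝ := 1 - E * t₀ ^ (1 - 𝔞) + E * t ^ (1 - 𝔞) with hBdef
  have hut : 0 < 1 + f t := hupos t (hIoo ht)
  have hlt2 : (1 + f t) ^ (1 - 𝔠) < (1 + β) ^ (1 - 𝔠) * B := by
    have e1 : ψ t = (1 + f t) ^ (1 - 𝔠) - K * t ^ (1 - 𝔞) := rfl
    have e2 : (1 + β) ^ (1 - 𝔠) - K * t₀ ^ (1 - 𝔞) + K * t ^ (1 - 𝔞)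
        = (1 + β) ^ (1 - 𝔠) * B := by
      rw [hKdef, hBdef]; ring
    rw [e1, hψt₀] at hψt
    linarith
  have hβpow : 0 < (1 + β) ^ (1 - 𝔠 : ℝ) := Real.rpow_pos_of_pos hβ1 _
  have hBpos : 0 < B := by
    have hp := Real.rpow_pos_of_pos hut (1 - 𝔠)
    nlinarith
  have hfinal := Real.rpow_lt_rpow_of_neg (Real.rpow_pos_of_pos hut (1 - 𝔠)) hlt2
    (by rw [one_div_neg]; exact hca)
  have hr1 : ((1 + f t) ^ (1 - 𝔠 : ℝ)) ^ (1 / (1 - 𝔠) : ℝ) = 1 + f t := by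
    rw [← Real.rpow_mul (le_of_lt hut), mul_one_div_cancel hca_ne, Real.rpow_one]
  have hr2 : ((1 + β) ^ (1 - 𝔠 : ℝ) * B) ^ (1 / (1 - 𝔠) : ℝ)
      = (1 + β) * B ^ (1 / (1 - 𝔠) : ℝ) := by
    rw [Real.mul_rpow (le_of_lt hβpow) (le_of_lt hBpos),
      ← Real.rpow_mul (le_of_lt (lt_of_lt_of_le (by norm_num : (0:ℝ) < 1) (by linarith : (1:ℝ) ≤ 1 + β))),
      mul_one_div_cancel hca_ne, Real.rpow_one]
  rw [hr1, hr2] at hfinal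
  exact hfinal
end

section
/- For the ODE with parameters 𝔞 = 4/3, 𝔟 = 2/3, 𝔠 = 4/3, t₀ = 1 and initial data f(1) = β > 0, f'(1) = 3(1+β)γ with γ > 0, the solution (the density contrast ϱ) satisfies, for t ∈ (1, t_m): ϱ(t) > exp( (3(ln(1+β)+3γ) t^{2/3} + 2(ln(1+β) − (9/2)γ) t^{−1})/5 ) − 1. -/
open Set Real Filter

set_option maxHeartbeats 2000000 in
theorem dc_core (A γ c : ℝ) (ϱ g g2 : ℝ → ℝ)
    (hA : 0 < A) (hc : 1 < c)
    (hw1 : Real.log (1 + ϱ 1) = A)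
    (hg1 : g 1 = 3 * (1 + ϱ 1) * γ)
    (pos : ∀ s ∈ Set.Ico (1:ℝ) c, 0 < 1 + ϱ s)
    (hcont : ContinuousOn ϱ (Set.Ico 1 c))
    (hgcont : ContinuousOn g (Set.Ico 1 c))
    (hder : ∀ t ∈ Set.Ioo (1:ℝ) c, HasDerivAt ϱ (g t) t)
    (hder2 : ∀ t ∈ Set.Ioo (1:ℝ) c, HasDerivAt g (g2 t) t)
    (hode : ∀ t ∈ Set.Ioo (1:ℝ) c,
      g2 t + (4 / (3 * t)) * g t - (2 / (3 * t ^ 2)) * ϱ t * (1 + ϱ t)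
        - (4 / 3) * (g t) ^ 2 / (1 + ϱ t) = 0) :
    ∀ x ∈ Set.Ioo (1:ℝ) c,
      (3 * (A + 3 * γ) * x ^ ((2:ℝ) / 3) + 2 * (A - 9 / 2 * γ) * x⁻¹) / 5
        < Real.log (1 + ϱ x) := by
  have hdefs :
      ∃ w wD wDD E eD eDD : ℝ → ℝ,
        w = (fun t => Real.log (1 + ϱ t)) ∧
        wD = (fun t => g t / (1 + ϱ t)) ∧
        wDD = (fun t => (g2 t * (1 + ϱ t) - g t * g t) / (1 + ϱ t) ^ 2) ∧
        E = (fun t => (3 * (A + 3 * γ) * t ^ ((2:ℝ) / 3) + 2 * (A - 9 / 2 * γ) * t⁻¹) / 5) ∧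
        eD = (fun t => (3 * (A + 3 * γ) * ((2:ℝ) / 3 * t ^ ((2:ℝ) / 3 - 1))
          + 2 * (A - 9 / 2 * γ) * (-(t ^ 2)⁻¹)) / 5) ∧
        eDD = (fun t => (3 * (A + 3 * γ) * ((2:ℝ) / 3 * (((2:ℝ) / 3 - 1) * t ^ ((2:ℝ) / 3 - 1 - 1)))
          + 2 * (A - 9 / 2 * γ) * (2 * t / (t ^ 2) ^ 2)) / 5) :=
    ⟨_, _, _, _, _, _, rfl, rfl, rfl, rfl, rfl, rfl⟩
  obtain ⟨w, wD, wDD, E, eD, eDD, hw, hwD, hwDD, hE, heD, heDD⟩ := hdefs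
  have hdefs2 :
      ∃ hd hdd hF φ φD : ℝ → ℝ,
        hd = (fun t => (w t - E t) + t * (wD t - eD t)) ∧
        hdd = (fun t => 2 * (wD t - eD t) + t * (wDD t - eDD t)) ∧
        hF = (fun t => t * (w t - E t)) ∧
        φ = (fun t => t ^ (-(2:ℝ) / 3) * hd t) ∧
        φD = (fun t => (-(2:ℝ) / 3 * t ^ (-(2:ℝ) / 3 - 1)) * hd t + t ^ (-(2:ℝ) / 3) * hdd t) :=
    ⟨_, _, _, _, _, rfl, rfl, rfl, rfl, rfl⟩
  obtain ⟨hd, hdd, hF, φ, φD, hhd, hhdd, hhF, hφ, hφD⟩ := hdefs2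
  have hgoal : ∀ x ∈ Set.Ioo (1:ℝ) c, E x < w x → 
      (3 * (A + 3 * γ) * x ^ ((2:ℝ) / 3) + 2 * (A - 9 / 2 * γ) * x⁻¹) / 5
        < Real.log (1 + ϱ x) := by
    intro x hx h; rw [hE, hw] at h; exact h
  intro x hx
  apply hgoal x hx
  have hx1 : (1:ℝ) < x := hx.1
  have hxc : x < c := hx.2
  have h1mem : (1:ℝ) ∈ Set.Ico (1:ℝ) c := ⟨le_rfl, hc⟩
  have hpos1 : 0 < 1 + ϱ 1 := pos 1 h1mem
  -- derivative of E
  have hEd : ∀ t : ℝ, 0 < t → HasDerivAt E (eD t) t := by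
    intro t ht
    have h1 : HasDerivAt (fun s : ℝ => s ^ ((2:ℝ) / 3)) ((2:ℝ) / 3 * t ^ ((2:ℝ) / 3 - 1)) t :=
      Real.hasDerivAt_rpow_const (Or.inl (ne_of_gt ht))
    have h2 : HasDerivAt (fun s : ℝ => s⁻¹) (-(t ^ 2)⁻¹) t := hasDerivAt_inv (ne_of_gt ht)
    rw [hE, heD]
    exact ((h1.const_mul (3 * (A + 3 * γ))).add (h2.const_mul (2 * (A - 9 / 2 * γ)))).div_const 5
  -- derivative of eD
  have heDd : ∀ t : ℝ, 0 < t → HasDerivAt eD (eDD t) t := by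
    intro t ht
    have h1 : HasDerivAt (fun s : ℝ => s ^ ((2:ℝ) / 3 - 1)) (((2:ℝ) / 3 - 1) * t ^ ((2:ℝ) / 3 - 1 - 1)) t :=
      Real.hasDerivAt_rpow_const (Or.inl (ne_of_gt ht))
    have h2 : HasDerivAt (fun s : ℝ => -(s ^ 2)⁻¹) (2 * t / (t ^ 2) ^ 2) t := by
      have h3 : HasDerivAt (fun s : ℝ => -(s ^ 2)⁻¹) _ t := ((hasDerivAt_pow 2 t).inv (pow_ne_zero 2 (ne_of_gt ht))).neg
      convert h3 using 1
      push_cast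
      ring
    rw [heD, heDD]
    exact (((h1.const_mul ((2:ℝ) / 3)).const_mul (3 * (A + 3 * γ))).add
      (h2.const_mul (2 * (A - 9 / 2 * γ)))).div_const 5
  -- derivative of w
  have hwd : ∀ t ∈ Set.Ioo (1:ℝ) c, HasDerivAt w (wD t) t := by
    intro t ht
    have hp : 0 < 1 + ϱ t := pos t ⟨ht.1.le, ht.2⟩
    have h1 : HasDerivAt (fun s => 1 + ϱ s) (g t) t := (hder t ht).const_add 1
    rw [hw, hwD]
    exact h1.log (ne_of_gt hp)
  -- derivative of wD
  have hwdd : ∀ t ∈ Set.Ioo (1:ℝ) c, HasDerivAt wD (wDD t) t := by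
    intro t ht
    have hp : 0 < 1 + ϱ t := pos t ⟨ht.1.le, ht.2⟩
    have h1 : HasDerivAt (fun s => 1 + ϱ s) (g t) t := (hder t ht).const_add 1
    rw [hwD, hwDD]
    exact (hder2 t ht).div h1 (ne_of_gt hp)
  -- derivative of hF
  have hhFd : ∀ t ∈ Set.Ioo (1:ℝ) c, HasDerivAt hF (hd t) t := by
    intro t ht
    have ht0 : (0:ℝ) < t := lt_trans one_pos ht.1
    have h1 : HasDerivAt (fun s => s * (w s - E s)) _ t := (hasDerivAt_id t).mul ((hwd t ht).sub (hEd t ht0))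
    rw [hhF, hhd]
    convert h1 using 1
    simp [id]
  -- derivative of hd
  have hhdd' : ∀ t ∈ Set.Ioo (1:ℝ) c, HasDerivAt hd (hdd t) t := by
    intro t ht
    have ht0 : (0:ℝ) < t := lt_trans one_pos ht.1
    have h1 : HasDerivAt (fun s => w s - E s + s * (wD s - eD s)) _ t := ((hwd t ht).sub (hEd t ht0)).add
      ((hasDerivAt_id t).mul ((hwdd t ht).sub (heDd t ht0)))
    rw [hhd, hhdd]
    convert h1 using 1
    simp [id]
    ring
  -- derivative of φ
  have hφd : ∀ t ∈ Set.Ioo (1:ℝ) c, HasDerivAt φ (φD t) t := by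
    intro t ht
    have ht0 : (0:ℝ) < t := lt_trans one_pos ht.1
    have h1 : HasDerivAt (fun s : ℝ => s ^ (-(2:ℝ) / 3)) (-(2:ℝ) / 3 * t ^ (-(2:ℝ) / 3 - 1)) t :=
      Real.hasDerivAt_rpow_const (Or.inl (ne_of_gt ht0))
    rw [hφ, hφD]
    exact h1.mul (hhdd' t ht)
  -- the key identity
  have key : ∀ t ∈ Set.Ioo (1:ℝ) c,
      hdd t - 2 / (3 * t) * hd t
        = t * (1 / 3 * (wD t) ^ 2 + 2 / (3 * t ^ 2) * (Real.exp (w t) - 1 - w t)) := by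
    intro t ht
    have ht0 : (0:ℝ) < t := lt_trans one_pos ht.1
    have hp : 0 < 1 + ϱ t := pos t ⟨ht.1.le, ht.2⟩
    have hexp : Real.exp (Real.log (1 + ϱ t)) = 1 + ϱ t := Real.exp_log hp
    have hode' := hode t ht
    have hg2 : g2 t = -(4 / (3 * t) * g t) + 2 / (3 * t ^ 2) * ϱ t * (1 + ϱ t)
        + 4 / 3 * (g t) ^ 2 / (1 + ϱ t) := by linarith
    have e1 : t ^ ((2:ℝ) / 3 - 1) = t ^ ((2:ℝ) / 3) * t⁻¹ := by
      rw [Real.rpow_sub ht0, Real.rpow_one, div_eq_mul_inv]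
    have e2 : t ^ ((2:ℝ) / 3 - 1 - 1) = t ^ ((2:ℝ) / 3) * t⁻¹ * t⁻¹ := by
      rw [Real.rpow_sub ht0 _ 1, Real.rpow_one, e1, div_eq_mul_inv]
    simp only [hhdd, hhd, hwD, hwDD, heD, heDD, hE, hw]
    rw [hg2, e1, e2, hexp]
    have hne : t ≠ 0 := ne_of_gt ht0
    have hpne : (1 + ϱ t) ≠ 0 := ne_of_gt hp
    field_simp
    ring
  -- φD nonneg
  have hφD0 : ∀ t ∈ Set.Ioo (1:ℝ) c, 0 ≤ φD t := by
    intro t ht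
    have ht0 : (0:ℝ) < t := lt_trans one_pos ht.1
    have e3 : t ^ (-(2:ℝ) / 3 - 1) = t ^ (-(2:ℝ) / 3) * t⁻¹ := by
      rw [Real.rpow_sub ht0, Real.rpow_one, div_eq_mul_inv]
    have hsplit : φD t = t ^ (-(2:ℝ) / 3) * (hdd t - 2 / (3 * t) * hd t) := by
      rw [hφD]
      simp only
      rw [e3]
      field_simp
      ring
    rw [hsplit, key t ht]
    have hrp : 0 < t ^ (-(2:ℝ) / 3) := Real.rpow_pos_of_pos ht0 _
    have hexp0 : 0 ≤ Real.exp (w t) - 1 - w t := by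
      have := Real.add_one_le_exp (w t); linarith
    have hR : 0 ≤ 1 / 3 * (wD t) ^ 2 + 2 / (3 * t ^ 2) * (Real.exp (w t) - 1 - w t) := by
      have h2 : 0 < 2 / (3 * t ^ 2) := by positivity
      nlinarith [sq_nonneg (wD t)]
    positivity
  -- continuity on [1, x]
  have hsub : Set.Icc (1:ℝ) x ⊆ Set.Ico 1 c := fun s hs => ⟨hs.1, lt_of_le_of_lt hs.2 hxc⟩
  have hIoosub : Set.Ioo (1:ℝ) x ⊆ Set.Ioo 1 c := fun s hs => ⟨hs.1, lt_trans hs.2 hxc⟩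
  have hpos' : ∀ s ∈ Set.Icc (1:ℝ) x, 0 < 1 + ϱ s := fun s hs => pos s (hsub hs)
  have hs0 : ∀ s ∈ Set.Icc (1:ℝ) x, (0:ℝ) < s := fun s hs => lt_of_lt_of_le one_pos hs.1
  have cϱ : ContinuousOn ϱ (Set.Icc (1:ℝ) x) := hcont.mono hsub
  have cg : ContinuousOn g (Set.Icc (1:ℝ) x) := hgcont.mono hsub
  have cw : ContinuousOn w (Set.Icc (1:ℝ) x) := by
    rw [hw]
    exact (continuousOn_const.add cϱ).log (fun s hs => ne_of_gt (hpos' s hs))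
  have cE : ContinuousOn E (Set.Icc (1:ℝ) x) := by
    rw [hE]
    intro s hs
    have hne : s ≠ 0 := ne_of_gt (hs0 s hs)
    have c1 : ContinuousAt (fun t : ℝ => t ^ ((2:ℝ) / 3)) s :=
      Real.continuousAt_rpow_const s _ (Or.inl hne)
    have c2 : ContinuousAt (fun t : ℝ => t⁻¹) s := continuousAt_inv₀ hne
    have c3 : ContinuousAt (fun t : ℝ => (3 * (A + 3 * γ) * t ^ ((2:ℝ) / 3) + 2 * (A - 9 / 2 * γ) * t⁻¹) / 5) s :=
      ((c1.const_mul _).add (c2.const_mul _)).div_const _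
    exact c3.continuousWithinAt
  have ceD : ContinuousOn eD (Set.Icc (1:ℝ) x) := by
    rw [heD]
    intro s hs
    have hne : s ≠ 0 := ne_of_gt (hs0 s hs)
    have c1 : ContinuousAt (fun t : ℝ => t ^ ((2:ℝ) / 3 - 1)) s :=
      Real.continuousAt_rpow_const s _ (Or.inl hne)
    have c2 : ContinuousAt (fun t : ℝ => -(t ^ 2)⁻¹) s :=
      (((continuous_pow 2).continuousAt).inv₀ (pow_ne_zero 2 hne)).neg
    have c3 : ContinuousAt (fun t : ℝ => (3 * (A + 3 * γ) * ((2:ℝ) / 3 * t ^ ((2:ℝ) / 3 - 1))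
        + 2 * (A - 9 / 2 * γ) * (-(t ^ 2)⁻¹)) / 5) s :=
      ((((c1.const_mul ((2:ℝ)/3)).const_mul _)).add (c2.const_mul _)).div_const _
    exact c3.continuousWithinAt
  have cwD : ContinuousOn wD (Set.Icc (1:ℝ) x) := by
    rw [hwD]
    exact cg.div (continuousOn_const.add cϱ) (fun s hs => ne_of_gt (hpos' s hs))
  have chd : ContinuousOn hd (Set.Icc (1:ℝ) x) := by
    rw [hhd]
    exact (cw.sub cE).add (continuousOn_id.mul (cwD.sub ceD))
  have crp : ContinuousOn (fun t : ℝ => t ^ (-(2:ℝ) / 3)) (Set.Icc (1:ℝ) x) := by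
    intro s hs
    exact (Real.continuousAt_rpow_const s _ (Or.inl (ne_of_gt (hs0 s hs)))).continuousWithinAt
  have cφ : ContinuousOn φ (Set.Icc (1:ℝ) x) := by
    rw [hφ]; exact crp.mul chd
  have chF : ContinuousOn hF (Set.Icc (1:ℝ) x) := by
    rw [hhF]; exact continuousOn_id.mul (cw.sub cE)
  -- initial values
  have hE1 : E 1 = A := by
    rw [hE]; simp only [Real.one_rpow, inv_one]; ring
  have heD1 : eD 1 = 3 * γ := by
    rw [heD]; simp only [Real.one_rpow, one_pow, inv_one]; ring
  have hwD1 : wD 1 = 3 * γ := by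
    rw [hwD]; simp only; rw [hg1]; field_simp
  have hw1' : w 1 = A := by rw [hw]; exact hw1
  have hd1 : hd 1 = 0 := by
    rw [hhd]; simp only; rw [hw1', hE1, hwD1, heD1]; ring
  have hφ1 : φ 1 = 0 := by
    rw [hφ]; simp only; rw [hd1]; ring
  have hF1 : hF 1 = 0 := by
    rw [hhF]; simp only; rw [hw1', hE1]; ring
  have h1Icc : (1:ℝ) ∈ Set.Icc (1:ℝ) x := ⟨le_rfl, hx1.le⟩
  have hxIcc : x ∈ Set.Icc (1:ℝ) x := ⟨hx1.le, le_rfl⟩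
  -- monotonicity of φ
  have monφ : MonotoneOn φ (Set.Icc (1:ℝ) x) := by
    apply monotoneOn_of_deriv_nonneg (convex_Icc 1 x) cφ
    · rw [interior_Icc]
      intro s hs
      exact ((hφd s (hIoosub hs)).differentiableAt).differentiableWithinAt
    · rw [interior_Icc]
      intro s hs
      rw [(hφd s (hIoosub hs)).deriv]
      exact hφD0 s (hIoosub hs)
  -- hd nonneg on [1,x]
  have hd_nonneg : ∀ s ∈ Set.Icc (1:ℝ) x, 0 ≤ hd s := by
    intro s hs
    have h0 : φ 1 ≤ φ s := monφ h1Icc hs hs.1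
    rw [hφ1] at h0
    rw [hφ] at h0
    simp only at h0
    have hrp : 0 < s ^ (-(2:ℝ) / 3) := Real.rpow_pos_of_pos (hs0 s hs) _
    nlinarith
  -- monotonicity of hF
  have monhF : MonotoneOn hF (Set.Icc (1:ℝ) x) := by
    apply monotoneOn_of_deriv_nonneg (convex_Icc 1 x) chF
    · rw [interior_Icc]
      intro s hs
      exact ((hhFd s (hIoosub hs)).differentiableAt).differentiableWithinAt
    · rw [interior_Icc]
      intro s hs
      rw [(hhFd s (hIoosub hs)).deriv]
      exact hd_nonneg s (Set.Ioo_subset_Icc_self hs)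
  have hFx : 0 ≤ hF x := by
    have := monhF h1Icc hxIcc hx1.le
    rwa [hF1] at this
  -- strictness
  by_contra hcon
  push_neg at hcon
  have hwxEx : w x ≤ E x := hcon
  have hFx0 : hF x = 0 := by
    have : hF x ≤ 0 := by
      rw [hhF]; simp only
      have hx0 : (0:ℝ) < x := lt_trans one_pos hx1
      nlinarith
    linarith
  have hFzero : ∀ s ∈ Set.Icc (1:ℝ) x, hF s = 0 := by
    intro s hs
    have h1 : hF 1 ≤ hF s := monhF h1Icc hs hs.1
    have h2 : hF s ≤ hF x := monhF hs hxIcc hs.2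
    rw [hF1] at h1; rw [hFx0] at h2
    linarith
  -- hd vanishes on the open interval
  have hdzero : ∀ s ∈ Set.Ioo (1:ℝ) x, hd s = 0 := by
    intro s hs
    have hmem : Set.Ioo (1:ℝ) x ∈ nhds s := isOpen_Ioo.mem_nhds hs
    have heq : hF =ᶠ[nhds s] fun _ => 0 :=
      Filter.eventually_of_mem hmem (fun y hy => hFzero y (Set.Ioo_subset_Icc_self hy))
    have hc0 : HasDerivAt hF 0 s := (hasDerivAt_const s (0:ℝ)).congr_of_eventuallyEq heq
    exact ((hhFd s (hIoosub hs)).unique hc0)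
  have hddzero : ∀ s ∈ Set.Ioo (1:ℝ) x, hdd s = 0 := by
    intro s hs
    have hmem : Set.Ioo (1:ℝ) x ∈ nhds s := isOpen_Ioo.mem_nhds hs
    have heq : hd =ᶠ[nhds s] fun _ => 0 :=
      Filter.eventually_of_mem hmem (fun y hy => hdzero y hy)
    have hc0 : HasDerivAt hd 0 s := (hasDerivAt_const s (0:ℝ)).congr_of_eventuallyEq heq
    exact ((hhdd' s (hIoosub hs)).unique hc0)
  -- find a point where E > 0
  have hEc1 : ContinuousAt E 1 := by
    rw [hE]
    have c1 : ContinuousAt (fun t : ℝ => t ^ ((2:ℝ) / 3)) 1 :=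
      Real.continuousAt_rpow_const 1 _ (Or.inl one_ne_zero)
    have c2 : ContinuousAt (fun t : ℝ => t⁻¹) 1 := continuousAt_inv₀ one_ne_zero
    have c3 : ContinuousAt (fun t : ℝ => (3 * (A + 3 * γ) * t ^ ((2:ℝ) / 3) + 2 * (A - 9 / 2 * γ) * t⁻¹) / 5) 1 :=
      ((c1.const_mul _).add (c2.const_mul _)).div_const _
    exact c3
  have hev1 : ∀ᶠ s in nhds (1:ℝ), 0 < E s := by
    have : Set.Ioi (0:ℝ) ∈ nhds (E 1) := isOpen_Ioi.mem_nhds (by rw [hE1]; exact hA)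
    exact hEc1.eventually_mem this
  have hev2 : Set.Ioo (1:ℝ) x ∈ nhdsWithin (1:ℝ) (Set.Ioi 1) :=
    Ioo_mem_nhdsGT_of_mem ⟨le_rfl, hx1⟩
  obtain ⟨s₀, hs₀E, hs₀mem⟩ :=
    ((hev1.filter_mono nhdsWithin_le_nhds).and (Filter.eventually_of_mem hev2 (fun y hy => hy))).exists
  -- at s₀ : w s₀ = E s₀ and exp (w s₀) = 1 + w s₀
  have hs₀0 : (0:ℝ) < s₀ := lt_trans one_pos hs₀mem.1
  have hws₀ : w s₀ = E s₀ := by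
    have h0 := hFzero s₀ (Set.Ioo_subset_Icc_self hs₀mem)
    rw [hhF] at h0
    simp only at h0
    have : w s₀ - E s₀ = 0 := by
      rcases mul_eq_zero.1 h0 with h | h
      · exact absurd h (ne_of_gt hs₀0)
      · exact h
    linarith
  have hkey := key s₀ (hIoosub hs₀mem)
  rw [hdzero s₀ hs₀mem, hddzero s₀ hs₀mem] at hkey
  have hR0 : 1 / 3 * (wD s₀) ^ 2 + 2 / (3 * s₀ ^ 2) * (Real.exp (w s₀) - 1 - w s₀) = 0 := by
    have : s₀ * (1 / 3 * (wD s₀) ^ 2 + 2 / (3 * s₀ ^ 2) * (Real.exp (w s₀) - 1 - w s₀)) = 0 := by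
      linarith
    rcases mul_eq_zero.1 this with h | h
    · exact absurd h (ne_of_gt hs₀0)
    · exact h
  have hexp0 : 0 ≤ Real.exp (w s₀) - 1 - w s₀ := by
    have := Real.add_one_le_exp (w s₀); linarith
  have hcoef : 0 < 2 / (3 * s₀ ^ 2) := by positivity
  have hexpeq : Real.exp (w s₀) - 1 - w s₀ = 0 := by
    nlinarith [sq_nonneg (wD s₀)]
  have hwne : w s₀ ≠ 0 := by
    rw [hws₀]; exact ne_of_gt hs₀E
  have := Real.add_one_lt_exp hwne
  linarith


theorem density_contrast_lower_bound (β γ t_m : ℝ)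
    (hβ : 0 < β) (hγ : 0 < γ) (htm : 1 < t_m)
    (ϱ : ℝ → ℝ) (hϱ : ContDiffOn ℝ 2 ϱ (Set.Ico 1 t_m))
    (hode : ∀ t ∈ Set.Ico (1 : ℝ) t_m,
      deriv (deriv ϱ) t + (4 / (3 * t)) * deriv ϱ t
        - (2 / (3 * t ^ 2)) * ϱ t * (1 + ϱ t)
        - (4 / 3) * (deriv ϱ t) ^ 2 / (1 + ϱ t) = 0)
    (hd1 : ϱ 1 = β) (hd2 : deriv ϱ 1 = 3 * (1 + β) * γ) :
    ∀ t ∈ Set.Ioo (1 : ℝ) t_m,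
      ϱ t >
        Real.exp
          ((3 * (Real.log (1 + β) + 3 * γ) * t ^ ((2 : ℝ) / 3)
            + 2 * (Real.log (1 + β) - (9 / 2) * γ) * t⁻¹) / 5) - 1 := by
  have hβ1 : (0:ℝ) < 1 + β := by linarith
  have hA : 0 < Real.log (1 + β) := Real.log_pos (by linarith)
  -- differentiability at 1
  have hdiff1 : DifferentiableAt ℝ ϱ 1 := by
    by_contra hnd
    rw [deriv_zero_of_not_differentiableAt hnd] at hd2
    nlinarith
  set g : ℝ → ℝ := derivWithin ϱ (Set.Ico 1 t_m) with hgdef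
  have hg1 : g 1 = 3 * (1 + β) * γ := by
    rw [hgdef]
    rw [hdiff1.hasDerivAt.hasDerivWithinAt.derivWithin
      ((uniqueDiffOn_Ico 1 t_m) 1 ⟨le_rfl, htm⟩)]
    exact hd2
  have hgIoo : ∀ t ∈ Set.Ioo (1:ℝ) t_m, g t = deriv ϱ t := by
    intro t ht
    rw [hgdef]
    exact derivWithin_of_mem_nhds (Ico_mem_nhds ht.1 ht.2)
  have hgcont : ContinuousOn g (Set.Ico 1 t_m) :=
    hϱ.continuousOn_derivWithin (uniqueDiffOn_Ico 1 t_m) (by norm_num)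
  have hder : ∀ t ∈ Set.Ioo (1:ℝ) t_m, HasDerivAt ϱ (g t) t := by
    intro t ht
    rw [hgIoo t ht]
    exact ((hϱ.contDiffAt (Ico_mem_nhds ht.1 ht.2)).differentiableAt (by norm_num)).hasDerivAt
  have hder2 : ∀ t ∈ Set.Ioo (1:ℝ) t_m, HasDerivAt g (deriv (deriv ϱ) t) t := by
    intro t ht
    have hcd : ContDiffOn ℝ 1 (deriv ϱ) (Set.Ioo 1 t_m) :=
      (hϱ.mono Set.Ioo_subset_Ico_self).deriv_of_isOpen isOpen_Ioo (by norm_num)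
    have hdiff : DifferentiableAt ℝ (deriv ϱ) t :=
      ((hcd.differentiableOn one_ne_zero) t ht).differentiableAt (isOpen_Ioo.mem_nhds ht)
    have h1 : HasDerivAt (deriv ϱ) (deriv (deriv ϱ) t) t := hdiff.hasDerivAt
    apply h1.congr_of_eventuallyEq
    exact Filter.eventually_of_mem (isOpen_Ioo.mem_nhds ht) (fun y hy => hgIoo y hy)
  have hode' : ∀ t ∈ Set.Ioo (1:ℝ) t_m,
      deriv (deriv ϱ) t + (4 / (3 * t)) * g t - (2 / (3 * t ^ 2)) * ϱ t * (1 + ϱ t)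
        - (4 / 3) * (g t) ^ 2 / (1 + ϱ t) = 0 := by
    intro t ht
    have := hode t ⟨ht.1.le, ht.2⟩
    rw [hgIoo t ht]
    exact this
  have hw1 : Real.log (1 + ϱ 1) = Real.log (1 + β) := by rw [hd1]
  have hg1' : g 1 = 3 * (1 + ϱ 1) * γ := by rw [hd1]; exact hg1
  -- positivity of 1 + ϱ on [1, t_m)
  have posAll : ∀ s ∈ Set.Ico (1:ℝ) t_m, 0 < 1 + ϱ s := by
    by_contra hnpos
    push_neg at hnpos
    obtain ⟨z, hz, hzneg⟩ := hnpos
    have hzIcc : Set.Icc (1:ℝ) z ⊆ Set.Ico 1 t_m := fun s hs => ⟨hs.1, lt_of_le_of_lt hs.2 hz.2⟩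
    set Z : Set ℝ := Set.Icc (1:ℝ) z ∩ (fun t => 1 + ϱ t) ⁻¹' Set.Iic 0 with hZ
    have hZclosed : IsClosed Z :=
      ((continuousOn_const.add hϱ.continuousOn).mono hzIcc).preimage_isClosed_of_isClosed
        isClosed_Icc isClosed_Iic
    have hz1 : (1:ℝ) ≤ z := by
      by_contra h
      push_neg at h
      exact absurd hz.1 (not_le.2 h)
    have hzZ : z ∈ Z := ⟨⟨hz1, le_rfl⟩, hzneg⟩
    have hZne : Z.Nonempty := ⟨z, hzZ⟩
    have hZbdd : BddBelow Z := ⟨1, fun s hs => hs.1.1⟩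
    set t₁ := sInf Z with ht₁def
    have ht₁Z : t₁ ∈ Z := hZclosed.csInf_mem hZne hZbdd
    have ht₁Icc : t₁ ∈ Set.Icc (1:ℝ) z := ht₁Z.1
    have ht₁neg : 1 + ϱ t₁ ≤ 0 := ht₁Z.2
    have ht₁1 : 1 < t₁ := by
      rcases lt_or_eq_of_le ht₁Icc.1 with h | h
      · exact h
      · exfalso; rw [← h, hd1] at ht₁neg; linarith
    have ht₁tm : t₁ < t_m := lt_of_le_of_lt ht₁Icc.2 hz.2
    have posIco : ∀ s ∈ Set.Ico (1:ℝ) t₁, 0 < 1 + ϱ s := by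
      intro s hs
      by_contra h'
      push_neg at h'
      have hsZ : s ∈ Z := ⟨⟨hs.1, le_trans hs.2.le ht₁Icc.2⟩, h'⟩
      exact absurd (csInf_le hZbdd hsZ) (not_le.2 hs.2)
    have hIcosub : Set.Ico (1:ℝ) t₁ ⊆ Set.Ico 1 t_m := fun s hs => ⟨hs.1, lt_trans hs.2 ht₁tm⟩
    have hIoosub : Set.Ioo (1:ℝ) t₁ ⊆ Set.Ioo 1 t_m := fun s hs => ⟨hs.1, lt_trans hs.2 ht₁tm⟩
    have hcomp := dc_core (Real.log (1 + β)) γ t₁ ϱ g (deriv (deriv ϱ)) hA ht₁1 hw1 hg1'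
      posIco (hϱ.continuousOn.mono hIcosub) (hgcont.mono hIcosub)
      (fun t ht => hder t (hIoosub ht)) (fun t ht => hder2 t (hIoosub ht))
      (fun t ht => hode' t (hIoosub ht))
    -- limit argument at t₁
    set EE : ℝ → ℝ := fun t =>
      (3 * (Real.log (1 + β) + 3 * γ) * t ^ ((2:ℝ) / 3)
        + 2 * (Real.log (1 + β) - 9 / 2 * γ) * t⁻¹) / 5 with hEE
    have hev : ∀ᶠ s in nhdsWithin t₁ (Set.Iio t₁), Real.exp (EE s) ≤ 1 + ϱ s := by
      have hmem : Set.Ioo (1:ℝ) t₁ ∈ nhdsWithin t₁ (Set.Iio t₁) :=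
        Ioo_mem_nhdsLT_of_mem ⟨ht₁1, le_rfl⟩
      apply Filter.eventually_of_mem hmem
      intro s hs
      have h1 := hcomp s hs
      have h2 : Real.exp (EE s) < Real.exp (Real.log (1 + ϱ s)) := Real.exp_lt_exp.2 h1
      rw [Real.exp_log (posIco s ⟨hs.1.le, hs.2⟩)] at h2
      exact h2.le
    have ht₁0 : (0:ℝ) < t₁ := lt_trans one_pos ht₁1
    have hEEcont : ContinuousAt EE t₁ := by
      rw [hEE]
      have c1 : ContinuousAt (fun t : ℝ => t ^ ((2:ℝ) / 3)) t₁ :=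
        Real.continuousAt_rpow_const t₁ _ (Or.inl (ne_of_gt ht₁0))
      have c2 : ContinuousAt (fun t : ℝ => t⁻¹) t₁ := continuousAt_inv₀ (ne_of_gt ht₁0)
      have c3 : ContinuousAt (fun t : ℝ =>
          (3 * (Real.log (1 + β) + 3 * γ) * t ^ ((2:ℝ) / 3)
            + 2 * (Real.log (1 + β) - 9 / 2 * γ) * t⁻¹) / 5) t₁ :=
        ((c1.const_mul _).add (c2.const_mul _)).div_const _
      exact c3
    have hϱcont : Filter.Tendsto ϱ (nhdsWithin t₁ (Set.Iio t₁)) (nhds (ϱ t₁)) := by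
      have h1 : ContinuousWithinAt ϱ (Set.Ico 1 t_m) t₁ :=
        hϱ.continuousOn t₁ ⟨le_of_lt ht₁1, ht₁tm⟩
      apply h1.mono_of_mem_nhdsWithin
      apply Filter.mem_of_superset (Ioo_mem_nhdsLT_of_mem ⟨ht₁1, le_rfl⟩)
      exact fun s hs => ⟨hs.1.le, lt_trans hs.2 ht₁tm⟩
    have htend : Filter.Tendsto (fun s => 1 + ϱ s - Real.exp (EE s))
        (nhdsWithin t₁ (Set.Iio t₁)) (nhds (1 + ϱ t₁ - Real.exp (EE t₁))) := by
      apply Filter.Tendsto.sub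
      · exact (tendsto_const_nhds.add hϱcont)
      · exact ((Real.continuous_exp.continuousAt.comp hEEcont).tendsto).mono_left
          nhdsWithin_le_nhds
    have hge : 0 ≤ 1 + ϱ t₁ - Real.exp (EE t₁) :=
      ge_of_tendsto htend (hev.mono (fun s hs => by linarith))
    have := Real.exp_pos (EE t₁)
    linarith
  -- main application
  intro t ht
  have hcomp := dc_core (Real.log (1 + β)) γ t_m ϱ g (deriv (deriv ϱ)) hA htm hw1 hg1'
    posAll hϱ.continuousOn hgcont hder hder2 hode'
  have h1 := hcomp t ht
  have h2 : Real.exp ((3 * (Real.log (1 + β) + 3 * γ) * t ^ ((2:ℝ) / 3)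
      + 2 * (Real.log (1 + β) - 9 / 2 * γ) * t⁻¹) / 5)
      < Real.exp (Real.log (1 + ϱ t)) := Real.exp_lt_exp.2 h1
  rw [Real.exp_log (posAll t ⟨ht.1.le, ht.2⟩)] at h2
  linarith
end

section
/- For the ODE ϱ'' + (4/(3t))ϱ' − (2/(3t²))ϱ(1+ϱ) − (4/3)(ϱ')²/(1+ϱ) = 0 with ϱ(1) = β > 0, ϱ'(1) = 3(1+β)γ and γ > 1/3, the solution satisfies ϱ(t) > (1+β)/(1 − 3γ + 3γ t^{−1/3})³ − 1 for t ∈ (1, t_m), and the right-hand side blows up at t* = (1 − 1/(3γ))^{−3} > 1. -/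
open Filter Set

lemma right_pos_of_hasDerivAt {f : ℝ → ℝ} {a d : ℝ} (h : HasDerivAt f d a) (hd : 0 < d) :
    ∃ u, a < u ∧ ∀ s ∈ Set.Ioo a u, f a < f s := by
  have h1 : ∀ᶠ s in nhdsWithin a {a}ᶜ, 0 < slope f a s :=
    (hasDerivAt_iff_tendsto_slope.mp h).eventually (eventually_gt_nhds hd)
  have h2 : ∀ᶠ s in nhdsWithin a (Set.Ioi a), 0 < slope f a s :=
    h1.filter_mono (nhdsWithin_mono a fun x hx => Set.mem_compl_singleton_iff.mpr (ne_of_gt hx))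
  obtain ⟨u, hu, hsub⟩ := mem_nhdsGT_iff_exists_Ioo_subset.mp h2
  refine ⟨u, hu, fun s hs => ?_⟩
  have hslope : 0 < slope f a s := hsub hs
  rw [slope_def_field] at hslope
  have hsa : 0 < s - a := by linarith [hs.1]
  have := mul_pos hslope hsa
  rw [div_mul_cancel₀] at this
  · linarith
  · exact ne_of_gt hsa

set_option maxHeartbeats 1000000 in
theorem density_contrast_improved_bound (β γ t_m : ℝ)
    (hβ : 0 < β) (hγ : 1 / 3 < γ) (htm : 1 < t_m)
    (ϱ : ℝ → ℝ) (hϱ : ContDiffOn ℝ 2 ϱ (Set.Ico 1 t_m))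
    (hode : ∀ t ∈ Set.Ico (1 : ℝ) t_m,
      deriv (deriv ϱ) t + (4 / (3 * t)) * deriv ϱ t
        - (2 / (3 * t ^ 2)) * ϱ t * (1 + ϱ t)
        - (4 / 3) * (deriv ϱ t) ^ 2 / (1 + ϱ t) = 0)
    (hd1 : ϱ 1 = β) (hd2 : deriv ϱ 1 = 3 * (1 + β) * γ) :
    (∀ t ∈ Set.Ioo (1 : ℝ) t_m,
      ϱ t > (1 + β) / (1 - 3 * γ + 3 * γ * t ^ (-(1 : ℝ) / 3)) ^ 3 - 1) ∧
    (1 - 1 / (3 * γ)) ^ (-(3 : ℝ)) > 1 ∧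
    Tendsto (fun t : ℝ => (1 + β) / (1 - 3 * γ + 3 * γ * t ^ (-(1 : ℝ) / 3)) ^ 3 - 1)
      (nhdsWithin ((1 - 1 / (3 * γ)) ^ (-(3 : ℝ)))
        (Set.Iio ((1 - 1 / (3 * γ)) ^ (-(3 : ℝ))))) atTop := by
  have hβ1 : (0:ℝ) < 1 + β := by linarith
  have hγ0 : (0:ℝ) < γ := by linarith
  set c : ℝ := (1 + β) ^ (-(1:ℝ)/3) with hc
  have hc0 : 0 < c := Real.rpow_pos_of_pos hβ1 _
  -- differentiability of ϱ at 1
  have hϱdiff1 : DifferentiableAt ℝ ϱ 1 := by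
    by_contra hnot
    rw [deriv_zero_of_not_differentiableAt hnot] at hd2
    nlinarith
  have hϱd1 : HasDerivAt ϱ (3 * (1 + β) * γ) 1 := hd2 ▸ hϱdiff1.hasDerivAt
  -- smoothness at interior points
  have hsm : ∀ t ∈ Set.Ioo (1:ℝ) t_m,
      HasDerivAt ϱ (deriv ϱ t) t ∧ HasDerivAt (deriv ϱ) (deriv (deriv ϱ) t) t := by
    intro t ht
    have hnb : Set.Ioo (1:ℝ) t_m ∈ nhds t := isOpen_Ioo.mem_nhds ht
    have h2 : ContDiffOn ℝ 2 ϱ (Set.Ioo 1 t_m) := hϱ.mono Set.Ioo_subset_Ico_self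
    have hd : ContDiffOn ℝ 1 (deriv ϱ) (Set.Ioo 1 t_m) :=
      h2.deriv_of_isOpen isOpen_Ioo (by norm_num)
    constructor
    · exact ((h2.contDiffAt hnb).differentiableAt two_ne_zero).hasDerivAt
    · exact ((hd.contDiffAt hnb).differentiableAt one_ne_zero).hasDerivAt
  -- continuity of deriv ϱ on Ico
  have hcontd : ContinuousOn (deriv ϱ) (Set.Ico 1 t_m) := by
    have huni : UniqueDiffOn ℝ (Set.Ico (1:ℝ) t_m) := uniqueDiffOn_Ico 1 t_m
    have h1 : ContinuousOn (derivWithin ϱ (Set.Ico 1 t_m)) (Set.Ico 1 t_m) :=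
      hϱ.continuousOn_derivWithin huni (by norm_num)
    refine h1.congr fun x hx => ?_
    rcases eq_or_lt_of_le hx.1 with h | h
    · rw [← h]
      have h2 : derivWithin ϱ (Set.Ico 1 t_m) 1 = deriv ϱ 1 :=
        hϱdiff1.derivWithin (huni 1 ⟨le_refl 1, htm⟩)
      exact h2.symm
    · have hmem : Set.Ico (1:ℝ) t_m ∈ nhds x :=
        Filter.mem_of_superset (isOpen_Ioo.mem_nhds ⟨h, hx.2⟩) Set.Ioo_subset_Ico_self
      exact (derivWithin_of_mem_nhds hmem).symm
  have hcontϱ : ContinuousOn ϱ (Set.Ico 1 t_m) := hϱ.continuousOn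
  set F : ℝ → ℝ :=
    fun t => t ^ ((4:ℝ)/3) * ((-(1:ℝ)/3) * ((1 + ϱ t) ^ (-(4:ℝ)/3) * deriv ϱ t)) with hFdef
  have hF1 : F 1 = -(γ * c) := by
    have hpow : (1 + β) ^ (-(1:ℝ)/3) = (1 + β) ^ (-(4:ℝ)/3) * (1 + β) := by
      rw [show (-(1:ℝ)/3) = (-(4:ℝ)/3) + 1 by norm_num, Real.rpow_add hβ1, Real.rpow_one]
    simp only [hFdef, hd1, hd2, Real.one_rpow, hc, hpow]
    ring
  have hFderiv : ∀ t ∈ Set.Ioo (1:ℝ) t_m, 0 < 1 + ϱ t →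
      HasDerivAt F (-(2/9) * t ^ (-(2:ℝ)/3) * (ϱ t * (1 + ϱ t) ^ (-(1:ℝ)/3))) t := by
    intro t ht hpos
    obtain ⟨hϱt, hdd⟩ := hsm t ht
    have ht0 : (0:ℝ) < t := lt_trans one_pos ht.1
    have htne : t ≠ 0 := ne_of_gt ht0
    have hne : (1 + ϱ t) ≠ 0 := ne_of_gt hpos
    have hinner : HasDerivAt (fun s => 1 + ϱ s) (deriv ϱ t) t := hϱt.const_add 1
    have hg : HasDerivAt (fun s => (1 + ϱ s) ^ (-(4:ℝ)/3))
        (deriv ϱ t * (-(4:ℝ)/3) * (1 + ϱ t) ^ ((-(4:ℝ)/3) - 1)) t :=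
      hinner.rpow_const (Or.inl hne)
    have hprod : HasDerivAt (fun s => (1 + ϱ s) ^ (-(4:ℝ)/3) * deriv ϱ s)
        (deriv ϱ t * (-(4:ℝ)/3) * (1 + ϱ t) ^ ((-(4:ℝ)/3) - 1) * deriv ϱ t
          + (1 + ϱ t) ^ (-(4:ℝ)/3) * deriv (deriv ϱ) t) t := hg.mul hdd
    have hconst : HasDerivAt (fun s => (-(1:ℝ)/3) * ((1 + ϱ s) ^ (-(4:ℝ)/3) * deriv ϱ s))
        ((-(1:ℝ)/3) * (deriv ϱ t * (-(4:ℝ)/3) * (1 + ϱ t) ^ ((-(4:ℝ)/3) - 1) * deriv ϱ t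
          + (1 + ϱ t) ^ (-(4:ℝ)/3) * deriv (deriv ϱ) t)) t := hprod.const_mul _
    have h1 : HasDerivAt (fun s : ℝ => s ^ ((4:ℝ)/3)) (((4:ℝ)/3) * t ^ ((4:ℝ)/3 - 1)) t :=
      Real.hasDerivAt_rpow_const (Or.inl htne)
    have hF := h1.mul hconst
    refine HasDerivAt.congr_deriv hF ?_
    symm
    set ρ := ϱ t
    set p := deriv ϱ t
    have hq : deriv (deriv ϱ) t =
        -(4 / (3 * t)) * p + (2 / (3 * t ^ 2)) * ρ * (1 + ρ) + (4/3) * p ^ 2 / (1 + ρ) := by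
      have h0 := hode t ⟨le_of_lt ht.1, ht.2⟩
      linarith
    rw [hq]
    have i1 : (1 + ρ) ^ ((-(4:ℝ)/3) - 1) = (1 + ρ) ^ (-(4:ℝ)/3) / (1 + ρ) := by
      rw [Real.rpow_sub hpos, Real.rpow_one]
    have i2 : (1 + ρ) ^ (-(1:ℝ)/3) = (1 + ρ) ^ (-(4:ℝ)/3) * (1 + ρ) := by
      rw [show (-(1:ℝ)/3) = (-(4:ℝ)/3) + 1 by norm_num, Real.rpow_add hpos, Real.rpow_one]
    have i3 : t ^ ((4:ℝ)/3 - 1) = t ^ ((4:ℝ)/3) / t := by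
      rw [Real.rpow_sub ht0, Real.rpow_one]
    have i4 : t ^ (-(2:ℝ)/3) = t ^ ((4:ℝ)/3) / t ^ 2 := by
      rw [show (-(2:ℝ)/3) = (4:ℝ)/3 - 2 by norm_num, Real.rpow_sub ht0]
      norm_num [Real.rpow_two]
    rw [i1, i2, i3, i4]
    field_simp
    ring
  have hcontF : ∀ T ∈ Set.Ico (1:ℝ) t_m, (∀ s ∈ Set.Icc (1:ℝ) T, 0 < 1 + ϱ s) →
      ContinuousOn F (Set.Icc 1 T) := by
    intro T hT hpos
    have hsub : Set.Icc (1:ℝ) T ⊆ Set.Ico 1 t_m := fun x hx => ⟨hx.1, lt_of_le_of_lt hx.2 hT.2⟩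
    have h1 : ContinuousOn (fun t : ℝ => t ^ ((4:ℝ)/3)) (Set.Icc 1 T) :=
      continuousOn_id.rpow_const fun x hx => Or.inl (by nlinarith [hx.1] : (x:ℝ) ≠ 0)
    have h2 : ContinuousOn (fun t => (1 + ϱ t) ^ (-(4:ℝ)/3)) (Set.Icc 1 T) :=
      (continuousOn_const.add (hcontϱ.mono hsub)).rpow_const
        fun x hx => Or.inl (ne_of_gt (hpos x hx))
    exact h1.mul (continuousOn_const.mul (h2.mul (hcontd.mono hsub)))
  -- if ϱ ≥ β on [1,T] then deriv ϱ > 0 on (1,T]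
  have derivpos : ∀ T ∈ Set.Ioo (1:ℝ) t_m, (∀ s ∈ Set.Icc (1:ℝ) T, β ≤ ϱ s) →
      ∀ s ∈ Set.Ioc (1:ℝ) T, 0 < deriv ϱ s := by
    intro T hT hge s hs
    have hpos : ∀ x ∈ Set.Icc (1:ℝ) T, 0 < 1 + ϱ x := fun x hx => by linarith [hge x hx]
    have hanti : StrictAntiOn F (Set.Icc 1 T) := by
      refine strictAntiOn_of_deriv_neg (convex_Icc 1 T)
        (hcontF T ⟨le_of_lt hT.1, hT.2⟩ hpos) fun x hx => ?_
      rw [interior_Icc] at hx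
      have hx' : x ∈ Set.Ioo (1:ℝ) t_m := ⟨hx.1, lt_trans hx.2 hT.2⟩
      have hpx : 0 < 1 + ϱ x := hpos x ⟨le_of_lt hx.1, le_of_lt hx.2⟩
      rw [(hFderiv x hx' hpx).deriv]
      have hbx : β ≤ ϱ x := hge x ⟨le_of_lt hx.1, le_of_lt hx.2⟩
      have e1 : (0:ℝ) < x ^ (-(2:ℝ)/3) := Real.rpow_pos_of_pos (by linarith [hx.1]) _
      have e2 : (0:ℝ) < (1 + ϱ x) ^ (-(1:ℝ)/3) := Real.rpow_pos_of_pos hpx _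
      have hϱx0 : 0 < ϱ x := lt_of_lt_of_le hβ hbx
      nlinarith [mul_pos e1 (mul_pos hϱx0 e2)]
    have hFs : F s < -(γ * c) := by
      rw [← hF1]
      exact hanti ⟨le_rfl, le_trans hs.1.le hs.2⟩ ⟨hs.1.le, hs.2⟩ hs.1
    have hs0 : (0:ℝ) < s := lt_trans one_pos hs.1
    have hps : 0 < 1 + ϱ s := hpos s ⟨hs.1.le, hs.2⟩
    have e1 : (0:ℝ) < s ^ ((4:ℝ)/3) := Real.rpow_pos_of_pos hs0 _
    have e2 : (0:ℝ) < (1 + ϱ s) ^ (-(4:ℝ)/3) := Real.rpow_pos_of_pos hps _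
    have hFs2 : F s < 0 := by nlinarith [mul_pos hγ0 hc0]
    have hFeq : F s = s ^ ((4:ℝ)/3) * ((-(1:ℝ)/3) * ((1 + ϱ s) ^ (-(4:ℝ)/3) * deriv ϱ s)) := rfl
    by_contra hcon
    push_neg at hcon
    have hprod : 0 ≤ s ^ ((4:ℝ)/3) * ((1 + ϱ s) ^ (-(4:ℝ)/3) * -deriv ϱ s) :=
      mul_nonneg e1.le (mul_nonneg e2.le (neg_nonneg.mpr hcon))
    nlinarith [hprod]
  have monoStep : ∀ T ∈ Set.Ioo (1:ℝ) t_m, (∀ s ∈ Set.Icc (1:ℝ) T, β ≤ ϱ s) → β < ϱ T := by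
    intro T hT hge
    have hsub : Set.Icc (1:ℝ) T ⊆ Set.Ico 1 t_m := fun x hx => ⟨hx.1, lt_of_le_of_lt hx.2 hT.2⟩
    have hmono : StrictMonoOn ϱ (Set.Icc 1 T) := by
      refine strictMonoOn_of_deriv_pos (convex_Icc 1 T) (hcontϱ.mono hsub) fun x hx => ?_
      rw [interior_Icc] at hx
      exact derivpos T hT hge x ⟨hx.1, hx.2.le⟩
    have := hmono ⟨le_rfl, hT.1.le⟩ ⟨hT.1.le, le_rfl⟩ hT.1
    rwa [hd1] at this
  -- bootstrap
  have key1 : ∀ t₁ ∈ Set.Ioo (1:ℝ) t_m, ∀ s ∈ Set.Icc (1:ℝ) t₁, β ≤ ϱ s := by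
    intro t₁ ht₁
    set B := {T | T ∈ Set.Icc (1:ℝ) t₁ ∧ ∀ s ∈ Set.Icc (1:ℝ) T, β ≤ ϱ s} with hB
    have h1B : (1:ℝ) ∈ B := by
      refine ⟨⟨le_rfl, ht₁.1.le⟩, fun s hs => ?_⟩
      have : s = 1 := le_antisymm hs.2 hs.1
      rw [this, hd1]
    have hbdd : BddAbove B := ⟨t₁, fun x hx => hx.1.2⟩
    have hBne : B.Nonempty := ⟨1, h1B⟩
    set T₀ := sSup B with hT₀
    have hT₀1 : 1 ≤ T₀ := le_csSup hbdd h1B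
    have hT₀t₁ : T₀ ≤ t₁ := csSup_le hBne fun x hx => hx.1.2
    have hT₀lt : T₀ < t_m := lt_of_le_of_lt hT₀t₁ ht₁.2
    have hlt : ∀ s, 1 ≤ s → s < T₀ → β ≤ ϱ s := by
      intro s hs1 hs2
      obtain ⟨T, hTB, hsT⟩ := exists_lt_of_lt_csSup hBne hs2
      exact hTB.2 s ⟨hs1, hsT.le⟩
    have hT₀B : ∀ s ∈ Set.Icc (1:ℝ) T₀, β ≤ ϱ s := by
      intro s hs
      rcases lt_or_eq_of_le hs.2 with h | h
      · exact hlt s hs.1 h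
      · rw [h]
        rcases eq_or_lt_of_le hT₀1 with hT1 | hT1
        · rw [← hT1, hd1]
        · -- closure argument
          have hC : IsClosed (Set.Icc (1:ℝ) t₁ ∩ ϱ ⁻¹' Set.Ici β) := by
            refine ContinuousOn.preimage_isClosed_of_isClosed
              (hcontϱ.mono ?_) isClosed_Icc isClosed_Ici
            exact fun x hx => ⟨hx.1, lt_of_le_of_lt hx.2 ht₁.2⟩
          have hsubC : Set.Ico (1:ℝ) T₀ ⊆ Set.Icc (1:ℝ) t₁ ∩ ϱ ⁻¹' Set.Ici β := by
            intro x hx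
            exact ⟨⟨hx.1, le_trans hx.2.le hT₀t₁⟩, hlt x hx.1 hx.2⟩
          have hcl : T₀ ∈ closure (Set.Ico (1:ℝ) T₀) := by
            rw [closure_Ico (ne_of_lt hT1)]
            exact ⟨hT₀1, le_rfl⟩
          have := (hC.closure_subset_iff.mpr hsubC) hcl
          exact this.2
    -- T₀ = t₁
    rcases lt_or_eq_of_le hT₀t₁ with hlt' | heq
    · exfalso
      rcases eq_or_lt_of_le hT₀1 with hT1 | hT1
      · -- T₀ = 1 : use positive derivative at 1
        obtain ⟨u, hu1, hu⟩ := right_pos_of_hasDerivAt hϱd1 (by nlinarith)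
        set s' := min ((1 + u)/2) t₁ with hs'
        have hs'1 : 1 < s' := lt_min (by linarith) ht₁.1
        have hs'B : s' ∈ B := by
          refine ⟨⟨hs'1.le, min_le_right _ _⟩, fun s hs => ?_⟩
          rcases eq_or_lt_of_le hs.1 with h | h
          · rw [← h, hd1]
          · have hsu : s < u := by
              have := le_trans hs.2 (min_le_left _ _)
              linarith
            have := hu s ⟨h, hsu⟩
            rw [hd1] at this
            linarith
        have hle : s' ≤ T₀ := le_csSup hbdd hs'B
        rw [← hT1] at hle
        linarith
      · -- 1 < T₀ : use monoStep and continuity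
        have hβT₀ : β < ϱ T₀ := monoStep T₀ ⟨hT1, hT₀lt⟩ hT₀B
        have hcont : ContinuousAt ϱ T₀ := by
          have hnb : Set.Ico (1:ℝ) t_m ∈ nhds T₀ :=
            Filter.mem_of_superset (isOpen_Ioo.mem_nhds ⟨hT1, hT₀lt⟩) Set.Ioo_subset_Ico_self
          exact (hϱ.contDiffAt hnb).continuousAt
        have hev : ∀ᶠ x in nhds T₀, β < ϱ x := hcont.eventually_const_lt hβT₀
        obtain ⟨ε, hε, hball⟩ := Metric.eventually_nhds_iff.mp hev
        set s' := min (T₀ + ε/2) t₁ with hs'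
        have hs'T₀ : T₀ < s' := lt_min (by linarith) hlt'
        have hs'B : s' ∈ B := by
          refine ⟨⟨by linarith, min_le_right _ _⟩, fun s hs => ?_⟩
          rcases le_or_gt s T₀ with h | h
          · exact hT₀B s ⟨hs.1, h⟩
          · refine le_of_lt (hball ?_)
            have h1 : s ≤ T₀ + ε/2 := le_trans hs.2 (min_le_left _ _)
            rw [Real.dist_eq, abs_lt]
            constructor <;> linarith
        have hle : s' ≤ T₀ := le_csSup hbdd hs'B
        linarith
    · rw [heq] at hT₀B
      exact hT₀B
  -- comparison
  have key2 : ∀ t ∈ Set.Ioo (1:ℝ) t_m,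
      (1 + ϱ t) ^ (-(1:ℝ)/3) < c * (1 - 3*γ + 3*γ * t ^ (-(1:ℝ)/3)) := by
    intro t ht
    have hge : ∀ s ∈ Set.Icc (1:ℝ) t, β ≤ ϱ s := key1 t ht
    have hpos : ∀ s ∈ Set.Icc (1:ℝ) t, 0 < 1 + ϱ s := fun s hs => by linarith [hge s hs]
    have hsub : Set.Icc (1:ℝ) t ⊆ Set.Ico 1 t_m := fun x hx => ⟨hx.1, lt_of_le_of_lt hx.2 ht.2⟩
    set E : ℝ → ℝ := fun s => F s + γ * c with hEdef
    have hEanti : StrictAntiOn E (Set.Icc 1 t) := by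
      refine strictAntiOn_of_deriv_neg (convex_Icc 1 t)
        ((hcontF t ⟨ht.1.le, ht.2⟩ hpos).add continuousOn_const) fun x hx => ?_
      rw [interior_Icc] at hx
      have hx' : x ∈ Set.Ioo (1:ℝ) t_m := ⟨hx.1, lt_trans hx.2 ht.2⟩
      have hpx : 0 < 1 + ϱ x := hpos x ⟨hx.1.le, hx.2.le⟩
      have hder : HasDerivAt E (-(2/9) * x ^ (-(2:ℝ)/3) * (ϱ x * (1 + ϱ x) ^ (-(1:ℝ)/3))) x :=
        (hFderiv x hx' hpx).add_const _
      rw [hder.deriv]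
      have hϱx0 : 0 < ϱ x := lt_of_lt_of_le hβ (hge x ⟨hx.1.le, hx.2.le⟩)
      have e1 : (0:ℝ) < x ^ (-(2:ℝ)/3) := Real.rpow_pos_of_pos (by linarith [hx.1]) _
      have e2 : (0:ℝ) < (1 + ϱ x) ^ (-(1:ℝ)/3) := Real.rpow_pos_of_pos hpx _
      nlinarith [mul_pos e1 (mul_pos hϱx0 e2)]
    have hE1 : E 1 = 0 := by
      have : E 1 = F 1 + γ * c := rfl
      rw [this, hF1]
      ring
    set D : ℝ → ℝ :=
      fun s => (1 + ϱ s) ^ (-(1:ℝ)/3) - c * (1 - 3*γ + 3*γ * s ^ (-(1:ℝ)/3)) with hDdef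
    have hDanti : StrictAntiOn D (Set.Icc 1 t) := by
      refine strictAntiOn_of_deriv_neg (convex_Icc 1 t) ?_ fun x hx => ?_
      · refine ContinuousOn.sub ?_ ?_
        · exact (continuousOn_const.add (hcontϱ.mono hsub)).rpow_const
            fun x hx => Or.inl (ne_of_gt (hpos x hx))
        · refine continuousOn_const.mul (continuousOn_const.add (continuousOn_const.mul ?_))
          exact continuousOn_id.rpow_const fun x hx => Or.inl (by nlinarith [hx.1] : (x:ℝ) ≠ 0)
      · rw [interior_Icc] at hx
        have hx' : x ∈ Set.Ioo (1:ℝ) t_m := ⟨hx.1, lt_trans hx.2 ht.2⟩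
        have hx0 : (0:ℝ) < x := lt_trans one_pos hx.1
        have hpx : 0 < 1 + ϱ x := hpos x ⟨hx.1.le, hx.2.le⟩
        have hϱx := (hsm x hx').1
        have hu : HasDerivAt (fun s => (1 + ϱ s) ^ (-(1:ℝ)/3))
            (deriv ϱ x * (-(1:ℝ)/3) * (1 + ϱ x) ^ ((-(1:ℝ)/3) - 1)) x :=
          (hϱx.const_add 1).rpow_const (Or.inl (ne_of_gt hpx))
        have hrp : HasDerivAt (fun s : ℝ => s ^ (-(1:ℝ)/3))
            ((-(1:ℝ)/3) * x ^ ((-(1:ℝ)/3) - 1)) x :=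
          Real.hasDerivAt_rpow_const (Or.inl (ne_of_gt hx0))
        have hv : HasDerivAt (fun s : ℝ => c * (1 - 3*γ + 3*γ * s ^ (-(1:ℝ)/3)))
            (c * (3*γ * ((-(1:ℝ)/3) * x ^ ((-(1:ℝ)/3) - 1)))) x :=
          ((hrp.const_mul (3*γ)).const_add (1 - 3*γ)).const_mul c
        have hD : HasDerivAt D
            (deriv ϱ x * (-(1:ℝ)/3) * (1 + ϱ x) ^ ((-(1:ℝ)/3) - 1)
              - c * (3*γ * ((-(1:ℝ)/3) * x ^ ((-(1:ℝ)/3) - 1)))) x := hu.sub hv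
        rw [hD.deriv]
        have hEx : E x < 0 := by
          have := hEanti ⟨le_rfl, ht.1.le⟩ ⟨hx.1.le, hx.2.le⟩ hx.1
          rw [hE1] at this
          exact this
        have hFx : F x = x ^ ((4:ℝ)/3) * ((-(1:ℝ)/3) * ((1 + ϱ x) ^ (-(4:ℝ)/3) * deriv ϱ x)) :=
          rfl
        have hFxlt : F x < -(γ * c) := by
          have : E x = F x + γ * c := rfl
          rw [this] at hEx
          linarith
        have em43 : (0:ℝ) < x ^ (-(4:ℝ)/3) := Real.rpow_pos_of_pos hx0 _
        have h43 : x ^ ((4:ℝ)/3) * x ^ (-(4:ℝ)/3) = 1 := by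
          rw [← Real.rpow_add hx0]
          norm_num
        have hexp1 : (1 + ϱ x) ^ ((-(1:ℝ)/3) - 1) = (1 + ϱ x) ^ (-(4:ℝ)/3) := by
          norm_num
        have hexp2 : x ^ ((-(1:ℝ)/3) - 1) = x ^ (-(4:ℝ)/3) := by
          norm_num
        rw [hexp1, hexp2]
        have step : (F x + γ * c) * x ^ (-(4:ℝ)/3) < 0 :=
          mul_neg_of_neg_of_pos (by linarith) em43
        rw [hFx] at step
        have expand : (x ^ ((4:ℝ)/3) * ((-(1:ℝ)/3) * ((1 + ϱ x) ^ (-(4:ℝ)/3) * deriv ϱ x))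
              + γ * c) * x ^ (-(4:ℝ)/3)
            = (-(1:ℝ)/3) * ((1 + ϱ x) ^ (-(4:ℝ)/3) * deriv ϱ x)
              + γ * c * x ^ (-(4:ℝ)/3) := by
          linear_combination ((-(1:ℝ)/3) * ((1 + ϱ x) ^ (-(4:ℝ)/3) * deriv ϱ x)) * h43
        rw [expand] at step
        linarith [step]
    have hD1 : D 1 = 0 := by
      have : D 1 = (1 + ϱ 1) ^ (-(1:ℝ)/3) - c * (1 - 3*γ + 3*γ * (1:ℝ) ^ (-(1:ℝ)/3)) := rfl
      rw [this, hd1, Real.one_rpow, ← hc]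
      ring
    have hDt : D t < 0 := by
      have := hDanti ⟨le_rfl, ht.1.le⟩ ⟨ht.1.le, le_rfl⟩ ht.1
      rw [hD1] at this
      exact this
    have : (1 + ϱ t) ^ (-(1:ℝ)/3) - c * (1 - 3*γ + 3*γ * t ^ (-(1:ℝ)/3)) < 0 := hDt
    linarith
  refine ⟨?_, ?_, ?_⟩
  · -- part 1
    intro t ht
    have h2 := key2 t ht
    have hϱβ : β ≤ ϱ t := key1 t ht t ⟨ht.1.le, le_rfl⟩
    have hpos : (0:ℝ) < 1 + ϱ t := by linarith
    obtain ⟨d, hd⟩ : ∃ d : ℝ, d = 1 - 3*γ + 3*γ * t ^ (-(1:ℝ)/3) := ⟨_, rfl⟩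
    rw [← hd] at h2 ⊢
    have hu0 : 0 < (1 + ϱ t) ^ (-(1:ℝ)/3) := Real.rpow_pos_of_pos hpos _
    have hd0 : 0 < d := by
      by_contra hcon
      push_neg at hcon
      have : c * d ≤ 0 := mul_nonpos_of_nonneg_of_nonpos hc0.le hcon
      linarith
    have hcube : ((1 + ϱ t) ^ (-(1:ℝ)/3)) ^ 3 < (c * d) ^ 3 :=
      pow_lt_pow_left₀ h2 hu0.le (by norm_num)
    have e1 : ((1 + ϱ t) ^ (-(1:ℝ)/3)) ^ 3 = (1 + ϱ t)⁻¹ := by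
      rw [← Real.rpow_natCast ((1 + ϱ t) ^ (-(1:ℝ)/3)) 3, ← Real.rpow_mul hpos.le]
      norm_num
      exact Real.rpow_neg_one _
    have e2 : (c * d) ^ 3 = (1 + β)⁻¹ * d ^ 3 := by
      rw [mul_pow, hc, ← Real.rpow_natCast ((1 + β) ^ (-(1:ℝ)/3)) 3, ← Real.rpow_mul hβ1.le]
      norm_num
      left
      exact Real.rpow_neg_one _
    rw [e1, e2] at hcube
    have hd3 : (0:ℝ) < d ^ 3 := pow_pos hd0 3
    rw [gt_iff_lt, sub_lt_iff_lt_add']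
    rw [div_lt_iff₀ hd3]
    have h10 : (1+β) * (1+ϱ t) * (1 + ϱ t)⁻¹ < (1+β) * (1+ϱ t) * ((1+β)⁻¹ * d^3) :=
      mul_lt_mul_of_pos_left hcube (mul_pos hβ1 hpos)
    have l1 : (1+β) * (1+ϱ t) * (1 + ϱ t)⁻¹ = 1+β := by
      field_simp
    have l2 : (1+β) * (1+ϱ t) * ((1+β)⁻¹ * d^3) = (1+ϱ t) * d^3 := by
      field_simp
    rw [l1, l2] at h10
    exact h10
  · -- part 2
    have hx0 : (0:ℝ) < 1 - 1/(3*γ) := by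
      have h1 : 1/(3*γ) < 1 := by
        rw [div_lt_one (by linarith)]
        linarith
      linarith
    have hx1 : 1 - 1/(3*γ) < 1 := by
      have : 0 < 1/(3*γ) := by positivity
      linarith
    exact (Real.one_lt_rpow_iff_of_pos hx0).mpr (Or.inr ⟨hx1, by norm_num⟩)
  · -- part 3
    have hx0 : (0:ℝ) < 1 - 1/(3*γ) := by
      have h1 : 1/(3*γ) < 1 := by
        rw [div_lt_one (by linarith)]
        linarith
      linarith
    set x := 1 - 1/(3*γ) with hxdef
    set tstar := x ^ (-(3:ℝ)) with htsdef
    have htstar0 : 0 < tstar := Real.rpow_pos_of_pos hx0 _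
    have hxt : tstar ^ (-(1:ℝ)/3) = x := by
      rw [htsdef, ← Real.rpow_mul hx0.le]
      norm_num
    have hgx : 3 * γ * x = 3*γ - 1 := by
      rw [hxdef]
      field_simp
    have hev : ∀ᶠ s in nhdsWithin tstar (Set.Iio tstar),
        0 < 1 - 3*γ + 3*γ * s ^ (-(1:ℝ)/3) := by
      have hmem : Set.Ioo 0 tstar ∈ nhdsWithin tstar (Set.Iio tstar) := by
        have := Filter.inter_mem
          (mem_nhdsWithin_of_mem_nhds (isOpen_Ioi.mem_nhds htstar0))
          (self_mem_nhdsWithin (a := tstar) (s := Set.Iio tstar))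
        rwa [Set.Ioi_inter_Iio] at this
      filter_upwards [hmem] with s hs
      have hs0 : (0:ℝ) < s := hs.1
      have hmono : tstar ^ (-(1:ℝ)/3) < s ^ (-(1:ℝ)/3) :=
        Real.rpow_lt_rpow_of_neg hs0 hs.2 (by norm_num)
      rw [hxt] at hmono
      have := mul_lt_mul_of_pos_left hmono (by linarith : (0:ℝ) < 3*γ)
      rw [hgx] at this
      linarith
    have hcont : Tendsto (fun s : ℝ => 1 - 3*γ + 3*γ * s ^ (-(1:ℝ)/3)) (nhds tstar)
        (nhds 0) := by
      have h1 : ContinuousAt (fun s : ℝ => s ^ (-(1:ℝ)/3)) tstar :=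
        Real.continuousAt_rpow_const tstar _ (Or.inl (ne_of_gt htstar0))
      have h2 : ContinuousAt (fun s : ℝ => 1 - 3*γ + 3*γ * s ^ (-(1:ℝ)/3)) tstar :=
        continuousAt_const.add (continuousAt_const.mul h1)
      have hval : 1 - 3*γ + 3*γ * tstar ^ (-(1:ℝ)/3) = 0 := by
        rw [hxt]
        linarith
      have h3 : Tendsto (fun s : ℝ => 1 - 3*γ + 3*γ * s ^ (-(1:ℝ)/3)) (nhds tstar)
          (nhds (1 - 3*γ + 3*γ * tstar ^ (-(1:ℝ)/3))) := h2
      rw [hval] at h3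
      exact h3
    have hcube : Tendsto (fun s : ℝ => (1 - 3*γ + 3*γ * s ^ (-(1:ℝ)/3)) ^ 3)
        (nhdsWithin tstar (Set.Iio tstar)) (nhdsWithin 0 (Set.Ioi 0)) := by
      apply tendsto_nhdsWithin_of_tendsto_nhds_of_eventually_within
      · have h3 : Tendsto (fun s : ℝ => 1 - 3*γ + 3*γ * s ^ (-(1:ℝ)/3))
            (nhdsWithin tstar (Set.Iio tstar)) (nhds 0) :=
          hcont.mono_left nhdsWithin_le_nhds
        have := h3.pow 3
        simpa using this
      · filter_upwards [hev] with s hs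
        exact pow_pos hs 3
    have h4 : Tendsto (fun s : ℝ => ((1 - 3*γ + 3*γ * s ^ (-(1:ℝ)/3)) ^ 3)⁻¹)
        (nhdsWithin tstar (Set.Iio tstar)) atTop := tendsto_inv_nhdsGT_zero.comp hcube
    have h5 : Tendsto (fun s : ℝ => (1+β) * ((1 - 3*γ + 3*γ * s ^ (-(1:ℝ)/3)) ^ 3)⁻¹)
        (nhdsWithin tstar (Set.Iio tstar)) atTop := h4.const_mul_atTop hβ1
    have h6 : Tendsto (fun s : ℝ => (1+β) / (1 - 3*γ + 3*γ * s ^ (-(1:ℝ)/3)) ^ 3)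
        (nhdsWithin tstar (Set.Iio tstar)) atTop :=
      h5.congr fun s => (div_eq_mul_inv _ _).symm
    have h7 := tendsto_atTop_add_const_right _ (-1 : ℝ) h6
    refine h7.congr fun s => ?_
    ring
end
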